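/- arXiv:2508.07004 — 7 statements merged into one kernel-verified Lean document; each statement's English description precedes it below -/
import Mathlib

section
/- Let D_S be a digraph with self-loops of order n, size m, σ self-loops, and c_2 (unordered) 2-cycles, with eigenvalues λ_1,...,λ_n. Then ∑_{i=1}^n Re(λ_i)^2 ≤ (m + 2c_2 + 2σ)/2 and ∑_{i=1}^n Im(λ_i)^2 ≤ (m − 2c_2)/2. -/
open Polynomial Finset Matrix
open scoped Classical

lemma charpoly_conj_unitary {n : ℕ} (U B : Matrix (Fin n) (Fin n) ℂ)
    (h1 : star U * U = 1) :
    (star U * B * U).charpoly = B.charpoly := by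
  have h2 : U * star U = 1 := mul_eq_one_comm.mp h1
  have hone : (1 : Matrix (Fin n) (Fin n) ℂ).map C = 1 :=
    Matrix.map_one _ (map_zero C) (map_one C)
  have key : charmatrix (star U * B * U)
      = (star U).map C * charmatrix B * U.map C := by
    rw [charmatrix, charmatrix, Matrix.mul_sub, Matrix.sub_mul]
    congr 1
    · have hc : Commute (Matrix.scalar (Fin n) (X : ℂ[X])) (U.map C) :=
        (Matrix.scalar_commute _ (fun p => Commute.all _ _) _)
      calc Matrix.scalar (Fin n) (X : ℂ[X])
          = (star U).map C * U.map C * Matrix.scalar (Fin n) (X : ℂ[X]) := by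
            rw [← Matrix.map_mul, h1, hone, one_mul]
        _ = (star U).map C * (Matrix.scalar (Fin n) (X : ℂ[X]) * U.map C) := by
            rw [mul_assoc, hc.eq]
        _ = (star U).map C * Matrix.scalar (Fin n) (X : ℂ[X]) * U.map C := by
            rw [mul_assoc]
    · show (RingHom.mapMatrix C) (star U * B * U) = _
      rw [_root_.map_mul, _root_.map_mul]; rfl
  rw [Matrix.charpoly, Matrix.charpoly, key, Matrix.det_mul, Matrix.det_mul,
    mul_comm, ← mul_assoc, ← Matrix.det_mul, ← Matrix.map_mul, h2, hone,
    Matrix.det_one, one_mul]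

lemma eval_charpoly' {n : ℕ} (B : Matrix (Fin n) (Fin n) ℂ) (μ : ℂ) :
    B.charpoly.eval μ = (μ • (1 : Matrix (Fin n) (Fin n) ℂ) - B).det := by
  rw [Matrix.charpoly, ← Polynomial.coe_evalRingHom, RingHom.map_det]
  congr 1
  ext i j
  by_cases h : i = j
  · subst h
    simp [Matrix.charmatrix_apply_eq, Matrix.sub_apply, Matrix.smul_apply, Matrix.one_apply]
  · simp [Matrix.charmatrix_apply_ne _ _ _ h, Matrix.sub_apply, Matrix.smul_apply,
      Matrix.one_apply_ne h]


lemma trace_mul_star_eq {k : ℕ} (N : Matrix (Fin k) (Fin k) ℂ) :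
    (N * star N).trace = ∑ i, ∑ j, (Complex.normSq (N i j) : ℂ) := by
  rw [Matrix.trace]
  refine Finset.sum_congr rfl fun i _ => ?_
  rw [Matrix.diag_apply, Matrix.mul_apply]
  refine Finset.sum_congr rfl fun j _ => ?_
  rw [Matrix.star_apply]
  exact Complex.mul_conj (N i j)

lemma key_lemma : ∀ (n : ℕ) (B : Matrix (Fin n) (Fin n) ℂ) (lam : Fin n → ℂ),
    B.charpoly = ∏ i, (X - C (lam i)) →
    (∑ i, Complex.normSq (lam i) ≤ ∑ i, ∑ j, Complex.normSq (B i j)) ∧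
      (∑ i, (lam i) ^ 2 = (B * B).trace) := by
  intro n
  induction n with
  | zero =>
    intro B lam _
    constructor
    · simp
    · simp [Matrix.trace]
  | succ n ih =>
    intro B lam hlam
    set μ := lam 0 with hμ
    -- μ is an eigenvalue of B
    have hdet : (μ • (1 : Matrix (Fin (n+1)) (Fin (n+1)) ℂ) - B).det = 0 := by
      have h1 : B.charpoly.eval μ = 0 := by
        rw [hlam, Polynomial.eval_prod]
        refine Finset.prod_eq_zero (Finset.mem_univ 0) ?_
        simp [hμ]
      rw [← eval_charpoly', h1]
    obtain ⟨v, hv0, hvec0⟩ := (Matrix.exists_mulVec_eq_zero_iff).mpr hdet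
    have hvec : B.mulVec v = μ • v := by
      have := hvec0
      rw [Matrix.sub_mulVec, Matrix.smul_mulVec, Matrix.one_mulVec, sub_eq_zero] at this
      exact this.symm
    set E := EuclideanSpace ℂ (Fin (n+1)) with hE
    set v' : E := WithLp.toLp 2 v with hv'
    have hvE : v' ≠ 0 := fun h => hv0 (by simpa [hv'] using congrArg WithLp.ofLp h)
    have h0 : ‖v'‖ ≠ 0 := norm_ne_zero_iff.mpr hvE
    set w : E := (‖v'‖ : ℂ)⁻¹ • v' with hw
    have hnw : ‖w‖ = 1 := by
      rw [hw, norm_smul]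
      simp only [norm_inv, Complex.norm_real, Real.norm_eq_abs, abs_norm]
      rw [abs_of_nonneg (norm_nonneg _)]; exact inv_mul_cancel₀ h0
    have hBw : B.mulVec w = μ • (w : Fin (n+1) → ℂ) := by
      show B.mulVec ((‖v'‖ : ℂ)⁻¹ • v) = _
      rw [Matrix.mulVec_smul, hvec]
      rw [hw, hv', smul_comm]; rfl
    have hcard : Module.finrank ℂ E = Fintype.card (Fin (n+1)) := by
      show Module.finrank ℂ (EuclideanSpace ℂ (Fin (n+1))) = _; rw [Fintype.card_fin]; exact finrank_euclideanSpace_fin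
    have horth : Orthonormal ℂ (({0} : Set (Fin (n+1))).restrict (fun _ => w)) := by
      rw [orthonormal_iff_ite]
      intro i j
      have hij : i = j := Subsingleton.elim i j
      subst hij
      simp [inner_self_eq_norm_sq_to_K, hnw]; exact Or.inl hnw
    obtain ⟨b, hb⟩ := horth.exists_orthonormalBasis_extension_of_card_eq hcard
    have hb0 : b 0 = w := hb 0 rfl
    set U : Matrix (Fin (n+1)) (Fin (n+1)) ℂ := Matrix.of fun k j => (b j : Fin (n+1) → ℂ) k with hUdef
    have hinner : ∀ i j, (∑ k, (starRingEnd ℂ) ((b i : Fin (n+1) → ℂ) k) * (b j : Fin (n+1) → ℂ) k)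
        = if i = j then 1 else 0 := by
      intro i j
      have := (orthonormal_iff_ite.mp b.orthonormal) i j
      rw [← this]
      rw [PiLp.inner_apply]
      exact Finset.sum_congr rfl fun k _ => by rw [RCLike.inner_apply]; ring
    have hU1 : star U * U = 1 := by
      ext i j
      rw [Matrix.mul_apply, Matrix.one_apply]
      simp only [Matrix.star_apply, hUdef, Matrix.of_apply, RCLike.star_def]
      exact hinner i j
    set M : Matrix (Fin (n+1)) (Fin (n+1)) ℂ := star U * B * U with hMdef
    have hcolU : ∀ k, U k 0 = (w : Fin (n+1) → ℂ) k := by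
      intro k; rw [hUdef]; show (b 0 : Fin (n+1) → ℂ) k = _; rw [hb0]
    have hM0 : ∀ i, M i 0 = if i = 0 then μ else 0 := by
      intro i
      have h1 : M i 0 = ∑ k, (star U) i k * (B * U) k 0 := by
        rw [hMdef, mul_assoc, Matrix.mul_apply]
      have hBU : ∀ k, (B * U) k 0 = μ * (w : Fin (n+1) → ℂ) k := by
        intro k
        rw [Matrix.mul_apply]
        have h2 : ∑ l, B k l * U l 0 = B.mulVec (w : Fin (n+1) → ℂ) k := by
          rw [Matrix.mulVec, dotProduct]
          exact Finset.sum_congr rfl fun l _ => by rw [hcolU]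
        rw [h2, hBw]; rfl
      rw [h1]
      calc ∑ k, (star U) i k * (B * U) k 0
          = μ * ∑ k, (starRingEnd ℂ) ((b i : Fin (n+1) → ℂ) k) * (b 0 : Fin (n+1) → ℂ) k := by
            rw [Finset.mul_sum]
            refine Finset.sum_congr rfl fun k _ => ?_
            rw [hBU k, Matrix.star_apply, hUdef]
            show (starRingEnd ℂ) ((b i : Fin (n+1) → ℂ) k) * (μ * (w : Fin (n+1) → ℂ) k) = _
            rw [hb0]; ring
        _ = μ * if i = 0 then 1 else 0 := by rw [hinner i 0]
        _ = if i = 0 then μ else 0 := by split <;> ring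
    set M' : Matrix (Fin n) (Fin n) ℂ := M.submatrix Fin.succ Fin.succ with hM'def
    have hsub : (charmatrix M).submatrix Fin.succ Fin.succ = charmatrix M' := by
      ext i j
      by_cases h : i = j
      · subst h
        rw [Matrix.submatrix_apply, charmatrix_apply_eq, charmatrix_apply_eq, hM'def,
          Matrix.submatrix_apply]
      · rw [Matrix.submatrix_apply, charmatrix_apply_ne _ _ _ (fun hc => h (Fin.succ_inj.mp hc)),
          charmatrix_apply_ne _ _ _ h, hM'def, Matrix.submatrix_apply]
    have hchar : M.charpoly = (X - C μ) * M'.charpoly := by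
      rw [Matrix.charpoly, Matrix.det_succ_column_zero, Fin.sum_univ_succ]
      have hz : ∀ i : Fin n, (-1 : ℂ[X]) ^ ((Fin.succ i : Fin (n+1)) : ℕ)
          * charmatrix M (Fin.succ i) 0
          * ((charmatrix M).submatrix (Fin.succ i).succAbove Fin.succ).det = 0 := by
        intro i
        have : charmatrix M (Fin.succ i) 0 = 0 := by
          rw [charmatrix_apply_ne _ _ _ (Fin.succ_ne_zero i)]
          rw [hM0, if_neg (Fin.succ_ne_zero i)]
          simp
        rw [this]; ring
      rw [Finset.sum_congr rfl (fun i _ => hz i), Finset.sum_const, smul_zero, add_zero]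
      rw [charmatrix_apply_eq, hM0 0, if_pos rfl, Fin.succAbove_zero, hsub]
      rw [Matrix.charpoly]
      simp
    -- charpoly of B equals charpoly of M, then factor
    have hU2 : U * star U = 1 := mul_eq_one_comm.mp hU1
    have hcharB : B.charpoly = M.charpoly := (charpoly_conj_unitary U B hU1).symm
    have hfact : (X - C μ) * (∏ i : Fin n, (X - C (lam i.succ)))
        = (X - C μ) * M'.charpoly := by
      rw [← hchar, ← hcharB, hlam, Fin.prod_univ_succ, hμ]
    have hcharM' : M'.charpoly = ∏ i : Fin n, (X - C (lam i.succ)) :=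
      (mul_left_cancel₀ (Polynomial.X_sub_C_ne_zero μ) hfact).symm
    obtain ⟨ih1, ih2⟩ := ih M' (fun i => lam i.succ) hcharM'
    -- trace identities
    have hMM : M * M = star U * (B * B) * U := by
      have e1 : M * M = star U * (B * ((U * star U) * (B * U))) := by
        rw [hMdef]; simp only [Matrix.mul_assoc]
      rw [e1, hU2, Matrix.one_mul]; simp only [Matrix.mul_assoc]
    have htr1 : (M * M).trace = (B * B).trace := by
      rw [hMM, Matrix.mul_assoc, Matrix.trace_mul_comm, Matrix.mul_assoc, hU2,
        Matrix.mul_one]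
    have htr2 : (M * M).trace = μ ^ 2 + (M' * M').trace := by
      rw [Matrix.trace, Fin.sum_univ_succ]
      congr 1
      · rw [Matrix.diag_apply, Matrix.mul_apply, Fin.sum_univ_succ]
        have hz : ∀ k : Fin n, M 0 (Fin.succ k) * M (Fin.succ k) 0 = 0 := by
          intro k
          rw [hM0 (Fin.succ k), if_neg (Fin.succ_ne_zero k), mul_zero]
        rw [Finset.sum_congr rfl (fun k _ => hz k), Finset.sum_const, smul_zero, add_zero,
          hM0 0, if_pos rfl, sq]
      · refine Finset.sum_congr rfl fun i _ => ?_
        rw [Matrix.diag_apply, Matrix.diag_apply, Matrix.mul_apply, Matrix.mul_apply,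
          Fin.sum_univ_succ, hM0 (Fin.succ i), if_neg (Fin.succ_ne_zero i), zero_mul,
          zero_add]
        refine Finset.sum_congr rfl fun j _ => ?_
        rw [hM'def]
        rfl
    -- Frobenius norms agree
    have hMstar : M * star M = star U * (B * star B) * U := by
      have e0 : star M = star U * star B * U := by
        rw [hMdef, StarMul.star_mul, StarMul.star_mul, star_star, Matrix.mul_assoc]
      have e1 : M * star M = star U * (B * ((U * star U) * (star B * U))) := by
        rw [hMdef, e0]; simp only [Matrix.mul_assoc]
      rw [e1, hU2, Matrix.one_mul]; simp only [Matrix.mul_assoc]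
    have hfro : (∑ i, ∑ j, Complex.normSq (M i j)) = ∑ i, ∑ j, Complex.normSq (B i j) := by
      have hc : (↑(∑ i, ∑ j, Complex.normSq (M i j)) : ℂ)
          = ↑(∑ i, ∑ j, Complex.normSq (B i j)) := by
        push_cast
        rw [← trace_mul_star_eq, ← trace_mul_star_eq, hMstar, Matrix.mul_assoc,
          Matrix.trace_mul_comm, Matrix.mul_assoc, hU2, Matrix.mul_one]
      exact_mod_cast hc
    constructor
    · -- Schur inequality
      have hsplit : (∑ i, ∑ j, Complex.normSq (M i j))
          ≥ Complex.normSq (M 0 0) + ∑ i, ∑ j, Complex.normSq (M' i j) := by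
        rw [Fin.sum_univ_succ]
        have h00 : ∑ j, Complex.normSq (M 0 j) ≥ Complex.normSq (M 0 0) := by
          rw [Fin.sum_univ_succ]
          have : (0:ℝ) ≤ ∑ j : Fin n, Complex.normSq (M 0 (Fin.succ j)) :=
            Finset.sum_nonneg fun _ _ => Complex.normSq_nonneg _
          linarith
        have hrest : ∑ i : Fin n, ∑ j, Complex.normSq (M (Fin.succ i) j)
            ≥ ∑ i, ∑ j, Complex.normSq (M' i j) := by
          refine Finset.sum_le_sum fun i _ => ?_
          rw [Fin.sum_univ_succ]
          have h0 : (0:ℝ) ≤ Complex.normSq (M (Fin.succ i) 0) := Complex.normSq_nonneg _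
          have he : ∑ j : Fin n, Complex.normSq (M' i j)
              = ∑ j : Fin n, Complex.normSq (M (Fin.succ i) (Fin.succ j)) := by
            refine Finset.sum_congr rfl fun j _ => ?_
            rw [hM'def]; rfl
          rw [he]; linarith
        linarith
      have hM00 : M 0 0 = μ := by rw [hM0 0, if_pos rfl]
      rw [← hfro, Fin.sum_univ_succ]
      have : Complex.normSq (lam 0) = Complex.normSq (M 0 0) := by rw [hM00, hμ]
      rw [this]
      linarith
    · rw [Fin.sum_univ_succ, ← htr1, htr2, ← hμ]
      have : ∑ i : Fin n, lam (Fin.succ i) ^ 2 = (M' * M').trace := ih2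
      rw [this]

lemma count_lemma {n : ℕ} (A : Matrix (Fin n) (Fin n) ℝ)
    (h01 : ∀ i j, A i j = 0 ∨ A i j = 1)
    (σ : ℕ) (hσ : σ = (univ.filter fun i => A i i = 1).card)
    (m : ℕ)
    (hm : m = (univ.filter fun p : Fin n × Fin n =>
      p.1 ≠ p.2 ∧ A p.1 p.2 = 1).card)
    (c2 : ℕ)
    (hc2 : 2 * c2 = (univ.filter fun p : Fin n × Fin n =>
      p.1 ≠ p.2 ∧ A p.1 p.2 = 1 ∧ A p.2 p.1 = 1).card) :
    (∑ i, ∑ j, (A i j)^2 = (m : ℝ) + σ) ∧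
    (∑ i, ∑ j, A i j * A j i = 2 * (c2:ℝ) + σ) := by
  have hσ' : (σ : ℝ) = ∑ i, (if A i i = 1 then (1:ℝ) else 0) := by
    rw [hσ, Finset.sum_boole]
  have hm' : (m : ℝ) = ∑ i, ∑ j, (if i ≠ j ∧ A i j = 1 then (1:ℝ) else 0) := by
    rw [hm]
    rw [← Finset.sum_product']
    rw [Finset.sum_boole]
    simp [Finset.univ_product_univ]
  have hc2' : 2 * (c2 : ℝ) = ∑ i, ∑ j, (if i ≠ j ∧ A i j = 1 ∧ A j i = 1 then (1:ℝ) else 0) := by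
    have : ((2 * c2 : ℕ) : ℝ) = 2 * (c2:ℝ) := by push_cast; ring
    rw [← this, hc2]
    rw [← Finset.sum_product', Finset.sum_boole]
    simp [Finset.univ_product_univ]
  have hdiag : ∀ i, (∑ j, if i = j ∧ A i j = 1 then (1:ℝ) else 0)
      = if A i i = 1 then 1 else 0 := by
    intro i
    calc ∑ j, (if i = j ∧ A i j = 1 then (1:ℝ) else 0)
        = ∑ j, if i = j then (if A i j = 1 then (1:ℝ) else 0) else 0 :=
          Finset.sum_congr rfl fun j _ => by by_cases h : i = j <;> simp [h]
      _ = if A i i = 1 then 1 else 0 := by rw [Finset.sum_ite_eq]; simp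
  constructor
  · rw [hm', hσ', ← Finset.sum_add_distrib]
    refine Finset.sum_congr rfl fun i _ => ?_
    rw [← hdiag i, ← Finset.sum_add_distrib]
    refine Finset.sum_congr rfl fun j _ => ?_
    by_cases hij : i = j
    · subst hij; rcases h01 i i with h | h <;> simp [h]
    · rcases h01 i j with h | h <;> simp [h, hij]
  · rw [hc2', hσ', ← Finset.sum_add_distrib]
    refine Finset.sum_congr rfl fun i _ => ?_
    rw [← hdiag i, ← Finset.sum_add_distrib]
    refine Finset.sum_congr rfl fun j _ => ?_
    by_cases hij : i = j
    · subst hij; rcases h01 i i with h | h <;> simp [h]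
    · rcases h01 i j with h | h <;> rcases h01 j i with h' | h' <;> simp [h, h', hij]


/-- Bounds on the sums of squared real and imaginary parts of the eigenvalues:
`∑ (Re λᵢ)² ≤ (m + 2c₂ + 2σ)/2` and `∑ (Im λᵢ)² ≤ (m − 2c₂)/2`. -/
theorem sum_re_im_sq_bounds {n : ℕ} (hn : 0 < n)
    (A : Matrix (Fin n) (Fin n) ℝ)
    (h01 : ∀ i j, A i j = 0 ∨ A i j = 1)
    (σ : ℕ) (hσ : σ = (univ.filter fun i => A i i = 1).card)
    (m : ℕ)
    (hm : m = (univ.filter fun p : Fin n × Fin n =>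
      p.1 ≠ p.2 ∧ A p.1 p.2 = 1).card)
    (c2 : ℕ)
    (hc2 : 2 * c2 = (univ.filter fun p : Fin n × Fin n =>
      p.1 ≠ p.2 ∧ A p.1 p.2 = 1 ∧ A p.2 p.1 = 1).card)
    (lam : Fin n → ℂ)
    (hlam : (A.map (Complex.ofReal)).charpoly = ∏ i, (X - C (lam i))) :
    (∑ i, (lam i).re ^ 2 ≤ ((m : ℝ) + 2 * c2 + 2 * σ) / 2) ∧
      (∑ i, (lam i).im ^ 2 ≤ ((m : ℝ) - 2 * c2) / 2) := by
  set B := A.map Complex.ofReal with hB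
  obtain ⟨k1, k2⟩ := key_lemma n B lam hlam
  obtain ⟨cnt1, cnt2⟩ := count_lemma A h01 σ hσ m hm c2 hc2
  have hBij : ∀ i j, Complex.normSq (B i j) = (A i j) ^ 2 := by
    intro i j
    rw [hB, Matrix.map_apply, Complex.normSq_ofReal, sq]
  have h1 : ∑ i, ((lam i).re ^ 2 + (lam i).im ^ 2) ≤ (m : ℝ) + σ := by
    calc ∑ i, ((lam i).re ^ 2 + (lam i).im ^ 2)
        = ∑ i, Complex.normSq (lam i) := by
          refine Finset.sum_congr rfl fun i _ => ?_
          rw [Complex.normSq_apply]; ring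
      _ ≤ ∑ i, ∑ j, Complex.normSq (B i j) := k1
      _ = ∑ i, ∑ j, (A i j) ^ 2 :=
          Finset.sum_congr rfl fun i _ => Finset.sum_congr rfl fun j _ => hBij i j
      _ = (m : ℝ) + σ := cnt1
  have htr : (B * B).trace = ((2 * (c2 : ℝ) + σ : ℝ) : ℂ) := by
    rw [← cnt2, Matrix.trace]
    push_cast [Matrix.diag_apply, Matrix.mul_apply, hB, Matrix.map_apply]
    rfl
  have h2 : ∑ i, ((lam i).re ^ 2 - (lam i).im ^ 2) = 2 * (c2 : ℝ) + σ := by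
    have hre := congrArg Complex.re (k2.trans htr)
    rw [Complex.re_sum, Complex.ofReal_re] at hre
    rw [← hre]
    refine Finset.sum_congr rfl fun i _ => ?_
    rw [sq (lam i), Complex.mul_re]; ring
  rw [Finset.sum_add_distrib] at h1
  rw [Finset.sum_sub_distrib] at h2
  constructor <;> linarith
end

section
/- Let D_S be a digraph with self-loops of order n and σ self-loops, and let D_1,...,D_k be its strong components, where D_i has order n_i and σ_i self-loops. Then |E(D_S) − ∑_{i=1}^k E(D_i)| ≤ 2σ. -/
open Polynomial Finset
open scoped Classical

/-- If `D₁, …, D_k` are the strong components of a digraph with self-loops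
`D_S` (of order `n` with `σ` self-loops), with `D_i` of order `nᵢ` and `σᵢ`
self-loops, then `|E(D_S) − ∑ E(Dᵢ)| ≤ 2σ`.  The spectrum of `D_S` is the
multiset union of the spectra of the components. -/
theorem energy_components_bound
    (k n σ : ℕ) (hk : 0 < k) (hn0 : 0 < n)
    (ni σi : Fin k → ℕ) (hni : ∀ i, 0 < ni i)
    (hn : n = ∑ i, ni i) (hσ : σ = ∑ i, σi i)
    (A : ∀ i : Fin k, Matrix (Fin (ni i)) (Fin (ni i)) ℝ)
    (h01 : ∀ i a b, A i a b = 0 ∨ A i a b = 1)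
    (hσi : ∀ i, σi i = (univ.filter fun a => A i a a = 1).card)
    (lam : ∀ i : Fin k, Fin (ni i) → ℂ)
    (hlam : ∀ i, ((A i).map (Complex.ofReal)).charpoly =
      ∏ j, (X - C (lam i j))) :
    abs ((∑ i, ∑ j, |(lam i j).re - (σ : ℝ) / (n : ℝ)|) -
        ∑ i, ∑ j, |(lam i j).re - (σi i : ℝ) / (ni i : ℝ)|) ≤ 2 * (σ : ℝ) := by
  have hnR : (0:ℝ) < n := by exact_mod_cast hn0
  have key : abs ((∑ i, ∑ j, |(lam i j).re - (σ : ℝ) / (n : ℝ)|) -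
        ∑ i, ∑ j, |(lam i j).re - (σi i : ℝ) / (ni i : ℝ)|) ≤
      ∑ i : Fin k, ((ni i : ℝ) * ((σ:ℝ)/(n:ℝ)) + (σi i : ℝ)) := by
    rw [← Finset.sum_sub_distrib]
    refine (Finset.abs_sum_le_sum_abs _ _).trans (Finset.sum_le_sum fun i _ => ?_)
    rw [← Finset.sum_sub_distrib]
    refine (Finset.abs_sum_le_sum_abs _ _).trans ?_
    have hb : ∀ j : Fin (ni i),
        |(|(lam i j).re - (σ : ℝ) / (n : ℝ)| - |(lam i j).re - (σi i : ℝ) / (ni i : ℝ)|)| ≤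
        (σ:ℝ)/(n:ℝ) + (σi i : ℝ)/(ni i : ℝ) := by
      intro j
      refine (abs_abs_sub_abs_le_abs_sub _ _).trans ?_
      have : (lam i j).re - (σ : ℝ) / (n : ℝ) - ((lam i j).re - (σi i : ℝ) / (ni i : ℝ))
          = (σi i : ℝ)/(ni i : ℝ) - (σ:ℝ)/(n:ℝ) := by ring
      rw [this]
      refine (abs_sub _ _).trans ?_
      rw [abs_of_nonneg (by positivity), abs_of_nonneg (by positivity)]
      linarith
    refine (Finset.sum_le_sum fun j _ => hb j).trans ?_
    rw [Finset.sum_const, Finset.card_univ, Fintype.card_fin, nsmul_eq_mul, mul_add]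
    have hniR : (ni i : ℝ) ≠ 0 := by
      have := hni i; positivity
    rw [mul_div_cancel₀ _ hniR]
  refine key.trans ?_
  rw [Finset.sum_add_distrib, ← Finset.sum_mul]
  have h1 : (∑ i : Fin k, (ni i : ℝ)) = (n:ℝ) := by
    rw [hn]; push_cast; ring
  have h2 : (∑ i : Fin k, (σi i : ℝ)) = (σ:ℝ) := by
    rw [hσ]; push_cast; ring
  rw [h1, h2, mul_div_cancel₀ _ (ne_of_gt hnR)]
  ring_nf
  linarith
end

section
/- Let D_S be a digraph with self-loops of order n and σ self-loops whose strong components D_1,...,D_k (of orders n_i with σ_i loops) satisfy: σ_i/n_i > σ/n for i = 1,...,l and σ_i/n_i ≤ σ/n for i = l+1,...,k, with 1 ≤ l < k. Let A_i = {j : Re(λ_{i,j}) > σ/n}. If ∑_{i=1}^l (σ_i/n_i − σ/n)|A_i| ≤ ∑_{i=l+1}^k (σ/n − σ_i/n_i)|A_i|, then E(D_S) ≤ ∑_{i=1}^k E(D_i). -/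
open Polynomial Finset
open scoped Classical


-- helper lemma: absolute sum identity
lemma abs_sum_eq {m : ℕ} (x : Fin m → ℝ) (t : ℝ) :
    ∑ j, |x j - t| =
      2 * ∑ j ∈ univ.filter (fun j => t < x j), (x j - t) - (∑ j, x j - m * t) := by
  have h : ∑ j, |x j - t| =
      ∑ j ∈ univ.filter (fun j => t < x j), (x j - t)
      - ∑ j ∈ univ.filter (fun j => ¬ t < x j), (x j - t) := by
    rw [← Finset.sum_filter_add_sum_filter_not univ (fun j => t < x j) (fun j => |x j - t|)]
    have e1 : ∑ j ∈ univ.filter (fun j => t < x j), |x j - t|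
        = ∑ j ∈ univ.filter (fun j => t < x j), (x j - t) :=
      Finset.sum_congr rfl fun j hj =>
        abs_of_pos (by have := (Finset.mem_filter.mp hj).2; linarith)
    have e2 : ∑ j ∈ univ.filter (fun j => ¬ t < x j), |x j - t|
        = - ∑ j ∈ univ.filter (fun j => ¬ t < x j), (x j - t) := by
      rw [← Finset.sum_neg_distrib]
      refine Finset.sum_congr rfl fun j hj => ?_
      have : x j ≤ t := le_of_not_gt (by simpa using (Finset.mem_filter.mp hj).2)
      rw [abs_of_nonpos (by linarith)]
    rw [e1, e2]; ring
  rw [h]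
  have h2 : ∑ j ∈ univ.filter (fun j => ¬ t < x j), (x j - t)
      = (∑ j, (x j - t)) - ∑ j ∈ univ.filter (fun j => t < x j), (x j - t) := by
    rw [eq_sub_iff_add_eq, add_comm,
      Finset.sum_filter_add_sum_filter_not univ (fun j => t < x j)]
  rw [h2, Finset.sum_sub_distrib]
  simp [Finset.card_univ]
  ring

/-- Sufficient condition for `E(D_S) ≤ ∑ E(Dᵢ)`: if the strong components are
ordered so that `σᵢ/nᵢ > σ/n` for `i < l` and `σᵢ/nᵢ ≤ σ/n` for `i ≥ l`
(`1 ≤ l < k`), and `∑_{i<l} (σᵢ/nᵢ − σ/n)|Aᵢ| ≤ ∑_{i≥l} (σ/n − σᵢ/nᵢ)|Aᵢ|`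
where `Aᵢ = {j : Re λ_{i,j} > σ/n}`, then `E(D_S) ≤ ∑ E(Dᵢ)`. -/
theorem energy_le_sum_components
    (k n σ l : ℕ) (hk : 0 < k) (hn0 : 0 < n) (hl1 : 1 ≤ l) (hlk : l < k)
    (ni σi : Fin k → ℕ) (hni : ∀ i, 0 < ni i)
    (hn : n = ∑ i, ni i) (hσ : σ = ∑ i, σi i)
    (A : ∀ i : Fin k, Matrix (Fin (ni i)) (Fin (ni i)) ℝ)
    (h01 : ∀ i a b, A i a b = 0 ∨ A i a b = 1)
    (hσi : ∀ i, σi i = (univ.filter fun a => A i a a = 1).card)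
    (lam : ∀ i : Fin k, Fin (ni i) → ℂ)
    (hlam : ∀ i, ((A i).map (Complex.ofReal)).charpoly =
      ∏ j, (X - C (lam i j)))
    (hgt : ∀ i : Fin k, (i : ℕ) < l → (σ : ℝ) / n < (σi i : ℝ) / (ni i))
    (hle : ∀ i : Fin k, l ≤ (i : ℕ) → (σi i : ℝ) / (ni i) ≤ (σ : ℝ) / n)
    (hcond :
      ∑ i ∈ univ.filter (fun i : Fin k => (i : ℕ) < l),
          ((σi i : ℝ) / (ni i) - (σ : ℝ) / n) *
            ((univ.filter fun j => (σ : ℝ) / n < (lam i j).re).card : ℝ) ≤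
        ∑ i ∈ univ.filter (fun i : Fin k => l ≤ (i : ℕ)),
          ((σ : ℝ) / n - (σi i : ℝ) / (ni i)) *
            ((univ.filter fun j => (σ : ℝ) / n < (lam i j).re).card : ℝ)) :
    ∑ i, ∑ j, |(lam i j).re - (σ : ℝ) / (n : ℝ)| ≤
      ∑ i, ∑ j, |(lam i j).re - (σi i : ℝ) / (ni i : ℝ)| := by
  set c : ℝ := (σ : ℝ) / n with hc
  -- trace fact
  have htr : ∀ i, ∑ j, (lam i j).re = (σi i : ℝ) := by
    intro i
    have hne : Nonempty (Fin (ni i)) := ⟨⟨0, hni i⟩⟩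
    have h1 : Matrix.trace ((A i).map (Complex.ofReal)) = ∑ j, lam i j := by
      rw [Matrix.trace_eq_neg_charpoly_coeff]
      have hdeg : ((A i).map (Complex.ofReal)).charpoly.natDegree = Fintype.card (Fin (ni i)) :=
        Matrix.charpoly_natDegree_eq_dim _
      have hpos : 0 < ((A i).map (Complex.ofReal)).charpoly.natDegree := by
        rw [hdeg]; simpa using hni i
      rw [← hdeg, ← Polynomial.nextCoeff_of_natDegree_pos hpos, hlam i,
        Polynomial.prod_X_sub_C_nextCoeff]
      ring
    have h2 : Matrix.trace ((A i).map (Complex.ofReal)) = ((∑ a, A i a a : ℝ) : ℂ) := by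
      simp [Matrix.trace, Matrix.diag, Matrix.map]
    have h3 : ∑ a, A i a a = (σi i : ℝ) := by
      rw [hσi i]
      rw [← Finset.sum_boole]
      refine Finset.sum_congr rfl fun a _ => ?_
      rcases h01 i a a with h | h <;> simp [h]
    have := h1.symm.trans h2
    have hre := congrArg Complex.re this
    simp [Complex.re_sum, h3] at hre
    linarith [hre]
  have hnc : (n : ℝ) * c = σ := by
    have hn' : (n : ℝ) ≠ 0 := Nat.cast_ne_zero.mpr hn0.ne'
    rw [hc]; field_simp
  have hnici : ∀ i, (ni i : ℝ) * ((σi i : ℝ) / ni i) = σi i := by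
    intro i; rw [mul_comm]
    exact div_mul_cancel₀ _ (Nat.cast_ne_zero.mpr (hni i).ne')
  -- rewrite LHS and RHS
  have hL : ∀ i, ∑ j, |(lam i j).re - c| =
      2 * ∑ j ∈ univ.filter (fun j => c < (lam i j).re), ((lam i j).re - c)
        - ((σi i : ℝ) - ni i * c) := by
    intro i; rw [abs_sum_eq (fun j => (lam i j).re) c, htr i]
  have hR : ∀ i, ∑ j, |(lam i j).re - (σi i : ℝ) / ni i| =
      2 * ∑ j ∈ univ.filter (fun j => (σi i : ℝ) / ni i < (lam i j).re),
        ((lam i j).re - (σi i : ℝ) / ni i) := by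
    intro i
    rw [abs_sum_eq (fun j => (lam i j).re) ((σi i : ℝ) / ni i), htr i, hnici i]
    ring
  -- key componentwise bound
  have key : ∀ i,
      ∑ j ∈ univ.filter (fun j => c < (lam i j).re), ((lam i j).re - c)
        + ((univ.filter fun j => c < (lam i j).re).card : ℝ) * (c - (σi i : ℝ) / ni i)
      ≤ ∑ j ∈ univ.filter (fun j => (σi i : ℝ) / ni i < (lam i j).re),
          ((lam i j).re - (σi i : ℝ) / ni i) := by
    intro i
    have h1 : ∑ j ∈ univ.filter (fun j => c < (lam i j).re), ((lam i j).re - c)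
        + ((univ.filter fun j => c < (lam i j).re).card : ℝ) * (c - (σi i : ℝ) / ni i)
        = ∑ j ∈ univ.filter (fun j => c < (lam i j).re),
            ((lam i j).re - (σi i : ℝ) / ni i) := by
      rw [Finset.sum_sub_distrib, Finset.sum_sub_distrib]
      simp [Finset.sum_const]
      ring
    rw [h1]
    calc ∑ j ∈ univ.filter (fun j => c < (lam i j).re),
            ((lam i j).re - (σi i : ℝ) / ni i)
        ≤ ∑ j ∈ univ.filter (fun j => c < (lam i j).re),
            max ((lam i j).re - (σi i : ℝ) / ni i) 0 :=
          Finset.sum_le_sum fun j _ => le_max_left _ _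
      _ ≤ ∑ j, max ((lam i j).re - (σi i : ℝ) / ni i) 0 :=
          Finset.sum_le_sum_of_subset_of_nonneg (Finset.filter_subset _ _)
            (fun j _ _ => le_max_right _ _)
      _ = ∑ j ∈ univ.filter (fun j => (σi i : ℝ) / ni i < (lam i j).re),
            ((lam i j).re - (σi i : ℝ) / ni i) := by
          rw [Finset.sum_filter]
          refine Finset.sum_congr rfl fun j _ => ?_
          rcases lt_or_ge ((σi i : ℝ) / ni i) ((lam i j).re) with h | h
          · simp [h, max_eq_left (by linarith : (0:ℝ) ≤ (lam i j).re - (σi i : ℝ)/ni i)]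
          · simp [not_lt.mpr h, max_eq_right (by linarith : (lam i j).re - (σi i : ℝ)/ni i ≤ 0)]
  -- nonnegativity from hcond
  have hsum0 : 0 ≤ ∑ i, ((univ.filter fun j => c < (lam i j).re).card : ℝ)
      * (c - (σi i : ℝ) / ni i) := by
    rw [← Finset.sum_filter_add_sum_filter_not univ (fun i : Fin k => (i : ℕ) < l)]
    have e1 : ∑ i ∈ univ.filter (fun i : Fin k => (i : ℕ) < l),
        ((univ.filter fun j => c < (lam i j).re).card : ℝ) * (c - (σi i : ℝ) / ni i)
        = - ∑ i ∈ univ.filter (fun i : Fin k => (i : ℕ) < l),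
          ((σi i : ℝ) / (ni i) - c) * ((univ.filter fun j => c < (lam i j).re).card : ℝ) := by
      rw [← Finset.sum_neg_distrib]
      exact Finset.sum_congr rfl fun i _ => by ring
    have e2 : ∑ i ∈ univ.filter (fun i : Fin k => ¬ (i : ℕ) < l),
        ((univ.filter fun j => c < (lam i j).re).card : ℝ) * (c - (σi i : ℝ) / ni i)
        = ∑ i ∈ univ.filter (fun i : Fin k => l ≤ (i : ℕ)),
          (c - (σi i : ℝ) / (ni i)) * ((univ.filter fun j => c < (lam i j).re).card : ℝ) := by
      refine Finset.sum_congr ?_ fun i _ => by ring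
      ext i; simp [not_lt]
    rw [e1, e2]
    linarith [hcond]
  -- put it together
  calc ∑ i, ∑ j, |(lam i j).re - c|
      = ∑ i, (2 * ∑ j ∈ univ.filter (fun j => c < (lam i j).re), ((lam i j).re - c)
          - ((σi i : ℝ) - ni i * c)) := Finset.sum_congr rfl fun i _ => hL i
    _ = 2 * ∑ i, ∑ j ∈ univ.filter (fun j => c < (lam i j).re), ((lam i j).re - c) := by
        rw [Finset.sum_sub_distrib, Finset.sum_sub_distrib, Finset.mul_sum]
        have : ∑ i, (ni i : ℝ) * c = (n : ℝ) * c := by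
          rw [← Finset.sum_mul]; congr 1; rw [hn]; push_cast; ring
        rw [this, hnc]
        have : ∑ i, (σi i : ℝ) = (σ : ℝ) := by rw [hσ]; push_cast; ring
        rw [this]; ring
    _ = 2 * ∑ i, (∑ j ∈ univ.filter (fun j => c < (lam i j).re), ((lam i j).re - c)
          + ((univ.filter fun j => c < (lam i j).re).card : ℝ) * (c - (σi i : ℝ) / ni i))
        - 2 * ∑ i, ((univ.filter fun j => c < (lam i j).re).card : ℝ)
          * (c - (σi i : ℝ) / ni i) := by
        rw [Finset.sum_add_distrib]; ring
    _ ≤ 2 * ∑ i, ∑ j ∈ univ.filter (fun j => (σi i : ℝ) / ni i < (lam i j).re),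
          ((lam i j).re - (σi i : ℝ) / ni i) - 0 := by
        gcongr 2 * ?_ - ?_
        · exact Finset.sum_le_sum fun i _ => key i
        · linarith [hsum0]
    _ = ∑ i, ∑ j, |(lam i j).re - (σi i : ℝ) / ni i| := by
        rw [sub_zero, Finset.mul_sum]
        exact (Finset.sum_congr rfl fun i _ => (hR i).symm)
end

section
/- With the setup of the previous statement, let B_i = {j : Re(λ_{i,j}) > σ_i/n_i}. If E(D_S) ≤ ∑_{i=1}^k E(D_i), then ∑_{i=1}^l (σ_i/n_i − σ/n)|B_i| ≤ ∑_{i=l+1}^k (σ/n − σ_i/n_i)|B_i|. -/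
open Polynomial Finset
open scoped Classical

/-- Necessary condition: with the same component setup, if
`E(D_S) ≤ ∑ E(Dᵢ)`, then
`∑_{i<l} (σᵢ/nᵢ − σ/n)|Bᵢ| ≤ ∑_{i≥l} (σ/n − σᵢ/nᵢ)|Bᵢ|`,
where `Bᵢ = {j : Re λ_{i,j} > σᵢ/nᵢ}`. -/
theorem necessary_condition_energy_le
    (k n σ l : ℕ) (hk : 0 < k) (hn0 : 0 < n) (hl1 : 1 ≤ l) (hlk : l < k)
    (ni σi : Fin k → ℕ) (hni : ∀ i, 0 < ni i)
    (hn : n = ∑ i, ni i) (hσ : σ = ∑ i, σi i)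
    (A : ∀ i : Fin k, Matrix (Fin (ni i)) (Fin (ni i)) ℝ)
    (h01 : ∀ i a b, A i a b = 0 ∨ A i a b = 1)
    (hσi : ∀ i, σi i = (univ.filter fun a => A i a a = 1).card)
    (lam : ∀ i : Fin k, Fin (ni i) → ℂ)
    (hlam : ∀ i, ((A i).map (Complex.ofReal)).charpoly =
      ∏ j, (X - C (lam i j)))
    (hgt : ∀ i : Fin k, (i : ℕ) < l → (σ : ℝ) / n < (σi i : ℝ) / (ni i))
    (hle : ∀ i : Fin k, l ≤ (i : ℕ) → (σi i : ℝ) / (ni i) ≤ (σ : ℝ) / n)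
    (hE : ∑ i, ∑ j, |(lam i j).re - (σ : ℝ) / (n : ℝ)| ≤
      ∑ i, ∑ j, |(lam i j).re - (σi i : ℝ) / (ni i : ℝ)|) :
    ∑ i ∈ univ.filter (fun i : Fin k => (i : ℕ) < l),
        ((σi i : ℝ) / (ni i) - (σ : ℝ) / n) *
          ((univ.filter fun j => (σi i : ℝ) / (ni i) < (lam i j).re).card : ℝ) ≤
      ∑ i ∈ univ.filter (fun i : Fin k => l ≤ (i : ℕ)),
        ((σ : ℝ) / n - (σi i : ℝ) / (ni i)) *
          ((univ.filter fun j => (σi i : ℝ) / (ni i) < (lam i j).re).card : ℝ) := by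
  classical
  set c : ℝ := (σ : ℝ) / n with hc
  set ci : Fin k → ℝ := fun i => (σi i : ℝ) / (ni i) with hci
  set b : Fin k → ℝ := fun i =>
    ((univ.filter fun j => ci i < (lam i j).re).card : ℝ) with hb
  -- per-component inequality
  have key : ∀ i : Fin k,
      (∑ j, |(lam i j).re - ci i|) + (2 * b i - (ni i : ℝ)) * (ci i - c)
        ≤ ∑ j, |(lam i j).re - c| := by
    intro i
    have hcard : ((univ.filter fun j => ci i < (lam i j).re).card : ℝ)
        + ((univ.filter fun j => ¬ ci i < (lam i j).re).card : ℝ) = (ni i : ℝ) := by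
      have h0 := Finset.card_filter_add_card_filter_not
        (s := (univ : Finset (Fin (ni i)))) (p := fun j => ci i < (lam i j).re)
      have h0' : (univ.filter fun j => ci i < (lam i j).re).card
          + (univ.filter fun j => ¬ ci i < (lam i j).re).card = ni i := by
        simpa using h0
      exact_mod_cast h0'
    have h1 : ∑ j, |(lam i j).re - ci i| =
        ∑ j ∈ univ.filter (fun j => ci i < (lam i j).re), |(lam i j).re - ci i|
        + ∑ j ∈ univ.filter (fun j => ¬ ci i < (lam i j).re), |(lam i j).re - ci i| :=
      (Finset.sum_filter_add_sum_filter_not _ _ _).symm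
    have h2 : ∑ j, |(lam i j).re - c| =
        ∑ j ∈ univ.filter (fun j => ci i < (lam i j).re), |(lam i j).re - c|
        + ∑ j ∈ univ.filter (fun j => ¬ ci i < (lam i j).re), |(lam i j).re - c| :=
      (Finset.sum_filter_add_sum_filter_not _ _ _).symm
    have hA : ∑ j ∈ univ.filter (fun j => ci i < (lam i j).re),
        (|(lam i j).re - ci i| + (ci i - c))
        ≤ ∑ j ∈ univ.filter (fun j => ci i < (lam i j).re), |(lam i j).re - c| := by
      apply Finset.sum_le_sum
      intro j hj
      have hj' : ci i < (lam i j).re := by simpa using (Finset.mem_filter.mp hj).2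
      rw [abs_of_pos (by linarith)]
      have : (lam i j).re - ci i + (ci i - c) = (lam i j).re - c := by ring
      rw [this]
      exact le_abs_self _
    have hB : ∑ j ∈ univ.filter (fun j => ¬ ci i < (lam i j).re),
        (|(lam i j).re - ci i| + (c - ci i))
        ≤ ∑ j ∈ univ.filter (fun j => ¬ ci i < (lam i j).re), |(lam i j).re - c| := by
      apply Finset.sum_le_sum
      intro j hj
      have hj' : (lam i j).re ≤ ci i := by
        have := (Finset.mem_filter.mp hj).2
        simpa using not_lt.mp (by simpa using this)
      rw [abs_of_nonpos (by linarith)]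
      have : -((lam i j).re - ci i) + (c - ci i) = -((lam i j).re - c) := by ring
      rw [this]
      exact neg_le_abs _
    have hsA : ∑ j ∈ univ.filter (fun j => ci i < (lam i j).re),
        (|(lam i j).re - ci i| + (ci i - c))
        = (∑ j ∈ univ.filter (fun j => ci i < (lam i j).re), |(lam i j).re - ci i|)
          + b i * (ci i - c) := by
      rw [Finset.sum_add_distrib, Finset.sum_const, nsmul_eq_mul]
    have hsB : ∑ j ∈ univ.filter (fun j => ¬ ci i < (lam i j).re),
        (|(lam i j).re - ci i| + (c - ci i))
        = (∑ j ∈ univ.filter (fun j => ¬ ci i < (lam i j).re), |(lam i j).re - ci i|)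
          + ((ni i : ℝ) - b i) * (c - ci i) := by
      rw [Finset.sum_add_distrib, Finset.sum_const, nsmul_eq_mul]
      have : ((univ.filter fun j => ¬ ci i < (lam i j).re).card : ℝ) = (ni i : ℝ) - b i := by
        rw [hb]; linarith [hcard]
      rw [this]
    rw [h1, h2]
    have := add_le_add hA hB
    rw [hsA, hsB] at this
    nlinarith [this]
  -- sum over components
  have hsum : ∑ i, (2 * b i - (ni i : ℝ)) * (ci i - c) ≤ 0 := by
    have h := Finset.sum_le_sum (fun i (_ : i ∈ (univ : Finset (Fin k))) => key i)
    rw [Finset.sum_add_distrib] at h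
    have := hE
    linarith
  have hzero : ∑ i, (ni i : ℝ) * (ci i - c) = 0 := by
    have h1 : ∀ i : Fin k, (ni i : ℝ) * ci i = (σi i : ℝ) := by
      intro i
      have hne : (ni i : ℝ) ≠ 0 := Nat.cast_ne_zero.mpr (hni i).ne'
      simp only [hci]
      rw [mul_comm, div_mul_cancel₀ _ hne]
    have h2 : (∑ i, (ni i : ℝ)) = (n : ℝ) := by
      rw [hn]; push_cast; ring
    have h3 : (n : ℝ) * c = (σ : ℝ) := by
      rw [hc]
      field_simp
    calc ∑ i, (ni i : ℝ) * (ci i - c)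
        = ∑ i, ((ni i : ℝ) * ci i) - (∑ i, (ni i : ℝ)) * c := by
          rw [Finset.sum_mul]
          rw [← Finset.sum_sub_distrib]
          congr 1; ext i; ring
      _ = (σ : ℝ) - (σ : ℝ) := by
          rw [h2, h3]
          congr 1
          rw [hσ]
          push_cast
          exact Finset.sum_congr rfl (fun i _ => h1 i)
      _ = 0 := by ring
  have hbsum : ∑ i, b i * (ci i - c) ≤ 0 := by
    have : ∑ i, (2 * b i - (ni i : ℝ)) * (ci i - c)
        = 2 * (∑ i, b i * (ci i - c)) - ∑ i, (ni i : ℝ) * (ci i - c) := by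
      rw [Finset.mul_sum, ← Finset.sum_sub_distrib]
      congr 1; ext i; ring
    rw [this, hzero] at hsum
    linarith
  -- split the full sum
  have hsplit : ∑ i, b i * (ci i - c)
      = ∑ i ∈ univ.filter (fun i : Fin k => (i : ℕ) < l), b i * (ci i - c)
        + ∑ i ∈ univ.filter (fun i : Fin k => ¬ (i : ℕ) < l), b i * (ci i - c) :=
    (Finset.sum_filter_add_sum_filter_not _ _ _).symm
  have hfilter : (univ.filter (fun i : Fin k => ¬ (i : ℕ) < l))
      = univ.filter (fun i : Fin k => l ≤ (i : ℕ)) := by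
    simp [not_lt]
  rw [hfilter] at hsplit
  rw [hsplit] at hbsum
  have e1 : ∑ i ∈ univ.filter (fun i : Fin k => (i : ℕ) < l), b i * (ci i - c)
      = ∑ i ∈ univ.filter (fun i : Fin k => (i : ℕ) < l), (ci i - c) * b i := by
    exact Finset.sum_congr rfl (fun i _ => mul_comm _ _)
  have e2 : ∑ i ∈ univ.filter (fun i : Fin k => l ≤ (i : ℕ)), b i * (ci i - c)
      = - ∑ i ∈ univ.filter (fun i : Fin k => l ≤ (i : ℕ)), (c - ci i) * b i := by
    rw [← Finset.sum_neg_distrib]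
    exact Finset.sum_congr rfl (fun i _ => by ring)
  rw [e1, e2] at hbsum
  linarith
end

section
/- Let D_S be a digraph with self-loops of order n with σ self-loops. If E(D_S) = 0, then σ = 0 or σ = n, and D_S is acyclic (its adjacency matrix has all eigenvalues equal to σ/n; in particular, the number of closed walks of every length k ≥ 2 that use at least two distinct vertices is zero). -/
open Polynomial Finset
open scoped Classical

private lemma aux_eval_charpoly {m : ℕ} (M : Matrix (Fin m) (Fin m) ℂ) (t : ℂ) :
    (M.charpoly).eval t = (Matrix.scalar (Fin m) t - M).det := by
  rw [Matrix.charpoly, ← Polynomial.coe_evalRingHom, RingHom.map_det]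
  congr 1
  ext i j
  by_cases h : i = j
  · subst h
    simp [Matrix.charmatrix_apply_eq, Matrix.scalar_apply, Matrix.diagonal_apply_eq]
  · simp [Matrix.charmatrix_apply_ne _ _ _ h, Matrix.scalar_apply, Matrix.diagonal_apply_ne _ h,
      Matrix.sub_apply]

private lemma aux_trace_eq_sum {m : ℕ} (hm : 0 < m) (M : Matrix (Fin m) (Fin m) ℂ)
    (f : Fin m → ℂ) (h : M.charpoly = ∏ i, (X - C (f i))) : M.trace = ∑ i, f i := by
  have : Nonempty (Fin m) := ⟨⟨0, hm⟩⟩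
  rw [Matrix.trace_eq_neg_charpoly_coeff, h]
  have h2 := Polynomial.prod_X_sub_C_coeff_card_pred (univ : Finset (Fin m)) f
    (by simpa using hm)
  simp only [Finset.card_univ, Fintype.card_fin] at h2 ⊢
  rw [h2, neg_neg]

private lemma aux_charpoly_sq {m : ℕ} (M : Matrix (Fin m) (Fin m) ℂ) (f : Fin m → ℂ)
    (h : M.charpoly = ∏ i, (X - C (f i))) :
    (M ^ 2).charpoly = ∏ i, (X - C (f i ^ 2)) := by
  apply Polynomial.funext
  intro y
  obtain ⟨t, rfl⟩ := IsAlgClosed.exists_pow_nat_eq y (n := 2) (by norm_num)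
  have hc : Commute (Matrix.scalar (Fin m) t) M := by
    apply Matrix.scalar_commute
    exact fun r => Commute.all t r
  have key : Matrix.scalar (Fin m) (t ^ 2) - M ^ 2
      = (Matrix.scalar (Fin m) t + M) * (Matrix.scalar (Fin m) t - M) := by
    rw [map_pow, hc.sq_sub_sq]
  have h1 : (Matrix.scalar (Fin m) t - M).det = ∏ i, (t - f i) := by
    rw [← aux_eval_charpoly, h, Polynomial.eval_prod]
    simp
  have h2 : (Matrix.scalar (Fin m) t + M).det = ∏ i, (t + f i) := by
    have e1 : Matrix.scalar (Fin m) t + M = -(Matrix.scalar (Fin m) (-t) - M) := by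
      rw [map_neg]; abel
    rw [e1, Matrix.det_neg, ← aux_eval_charpoly, h, Polynomial.eval_prod]
    simp only [Polynomial.eval_sub, Polynomial.eval_X, Polynomial.eval_C]
    rw [show ((-1 : ℂ)) ^ Fintype.card (Fin m) = ∏ _x : Fin m, (-1 : ℂ) by simp,
      ← Finset.prod_mul_distrib]
    congr 1; ext i; ring
  rw [aux_eval_charpoly, key, Matrix.det_mul, h1, h2, Polynomial.eval_prod,
    ← Finset.prod_mul_distrib]
  congr 1; ext i
  simp; ring

/-- If the energy of a digraph with self-loops vanishes, then `σ = 0` or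
`σ = n`, every eigenvalue equals `σ/n`, and the digraph is acyclic: the trace
of `A^k` (the number of closed walks of length `k`) equals `σ` for all `k ≥ 2`,
i.e. there are no closed walks through at least two distinct vertices. -/
theorem energy_eq_zero_iff_acyclic {n : ℕ} (hn : 0 < n)
    (A : Matrix (Fin n) (Fin n) ℝ)
    (h01 : ∀ i j, A i j = 0 ∨ A i j = 1)
    (σ : ℕ) (hσ : σ = (univ.filter fun i => A i i = 1).card)
    (lam : Fin n → ℂ)
    (hlam : (A.map (Complex.ofReal)).charpoly = ∏ i, (X - C (lam i)))
    (hE : ∑ i, |(lam i).re - (σ : ℝ) / (n : ℝ)| = 0) :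
    (σ = 0 ∨ σ = n) ∧ (∀ i, lam i = (σ : ℂ) / (n : ℂ)) ∧
      (∀ k : ℕ, 2 ≤ k → (A ^ k).trace = (σ : ℝ)) := by
  have hn' : (n : ℝ) ≠ 0 := Nat.cast_ne_zero.mpr hn.ne'
  set r : ℝ := (σ : ℝ) / (n : ℝ) with hr
  -- real parts all equal r
  have hre : ∀ i, (lam i).re = r := by
    intro i
    have h0 := (Finset.sum_eq_zero_iff_of_nonneg (fun j _ => abs_nonneg _)).mp hE i (mem_univ i)
    have := abs_eq_zero.mp h0
    linarith [this]
  -- σ ≤ n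
  have hσle : σ ≤ n := by
    rw [hσ]
    simpa using Finset.card_filter_le (univ : Finset (Fin n)) _
  -- trace A = σ on diagonal entries
  have hdiag : ∀ i, A i i = if A i i = 1 then (1 : ℝ) else 0 := by
    intro i; rcases h01 i i with h | h <;> simp [h]
  have htr : ∑ i, A i i = (σ : ℝ) := by
    rw [hσ]
    calc ∑ i, A i i = ∑ i, (if A i i = 1 then (1 : ℝ) else 0) := by
          exact Finset.sum_congr rfl fun i _ => hdiag i
      _ = ((univ.filter fun i => A i i = 1).card : ℝ) := by
          rw [Finset.sum_boole]
  -- σ ≤ trace (A^2)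
  have hA2 : (σ : ℝ) ≤ (A ^ 2).trace := by
    rw [← htr]
    unfold Matrix.trace
    apply Finset.sum_le_sum
    intro i _
    have hAii : A i i ≤ (A ^ 2) i i := by
      have : (A ^ 2) i i = ∑ j, A i j * A j i := by
        rw [pow_two, Matrix.mul_apply]
      rw [this]
      have hii : A i i * A i i = A i i := by
        rcases h01 i i with h | h <;> simp [h]
      calc A i i = A i i * A i i := hii.symm
        _ ≤ ∑ j, A i j * A j i := by
            apply Finset.single_le_sum (f := fun j => A i j * A j i) _ (mem_univ i)
            intro j _
            rcases h01 i j with h1 | h1 <;> rcases h01 j i with h2 | h2 <;>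
              simp [h1, h2]
    exact hAii
  -- trace of B^2 over ℂ
  have hmapsq : (A.map Complex.ofReal) ^ 2 = (A ^ 2).map Complex.ofReal := by
    rw [pow_two, pow_two]
    exact (Matrix.map_mul (f := Complex.ofRealHom)).symm
  have htrmap : ((A ^ 2).map Complex.ofReal).trace = (((A ^ 2).trace : ℝ) : ℂ) := by
    unfold Matrix.trace Matrix.diag
    push_cast
    rfl
  have hB2 : (((A ^ 2).trace : ℝ) : ℂ) = ∑ i, (lam i) ^ 2 := by
    rw [← htrmap, ← hmapsq]
    exact aux_trace_eq_sum hn _ _ (aux_charpoly_sq _ _ hlam)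
  -- take real parts
  have hreal : (A ^ 2).trace = (n : ℝ) * r ^ 2 - ∑ i, (lam i).im ^ 2 := by
    have := congrArg Complex.re hB2
    rw [Complex.ofReal_re] at this
    rw [this, Complex.re_sum]
    have : ∀ i, ((lam i) ^ 2).re = r ^ 2 - (lam i).im ^ 2 := by
      intro i
      rw [pow_two, Complex.mul_re, hre i]
      ring
    rw [Finset.sum_congr rfl fun i _ => this i, Finset.sum_sub_distrib]
    simp [mul_comm]
  have hS : (0 : ℝ) ≤ ∑ i, (lam i).im ^ 2 :=
    Finset.sum_nonneg fun i _ => sq_nonneg _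
  have hnr : (n : ℝ) * r = σ := by
    rw [hr]; field_simp
  have hσsq : (σ : ℝ) * σ ≤ (σ : ℝ) * n := by
    have : (σ : ℝ) ≤ n := Nat.cast_le.mpr hσle
    nlinarith [Nat.cast_nonneg (α := ℝ) σ]
  -- chain of inequalities
  have hkey : (∑ i, (lam i).im ^ 2 = 0) ∧ (σ : ℝ) * σ = (σ : ℝ) * n := by
    have h1 : (σ : ℝ) ≤ (n : ℝ) * r ^ 2 - ∑ i, (lam i).im ^ 2 := hreal ▸ hA2
    have h2 : (n : ℝ) * ((n : ℝ) * r ^ 2) = (σ : ℝ) * σ := by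
      rw [pow_two, ← mul_assoc, mul_comm ((n:ℝ) * (n:ℝ)) , ← mul_assoc]
      nlinarith [hnr]
    have hnpos : (0 : ℝ) < n := Nat.cast_pos.mpr hn
    constructor
    · nlinarith
    · nlinarith
  obtain ⟨him, hσeq⟩ := hkey
  have him' : ∀ i, (lam i).im = 0 := by
    intro i
    have := (Finset.sum_eq_zero_iff_of_nonneg (fun j _ => sq_nonneg _)).mp him i (mem_univ i)
    exact pow_eq_zero_iff (by norm_num) |>.mp this
  -- conclusion 1
  have hσ0n : σ = 0 ∨ σ = n := by
    have : σ * σ = σ * n := by exact_mod_cast hσeq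
    rcases Nat.eq_zero_or_pos σ with h | h
    · exact Or.inl h
    · exact Or.inr (Nat.eq_of_mul_eq_mul_left h this)
  -- conclusion 2
  have hlamr : ∀ i, lam i = ((r : ℝ) : ℂ) := by
    intro i
    apply Complex.ext
    · rw [hre i, Complex.ofReal_re]
    · rw [him' i, Complex.ofReal_im]
  have hcast : ((σ : ℂ) / (n : ℂ)) = ((r : ℝ) : ℂ) := by
    rw [hr]; push_cast; ring
  have hlam2 : ∀ i, lam i = (σ : ℂ) / (n : ℂ) := fun i => by rw [hlamr i, hcast]
  refine ⟨hσ0n, hlam2, ?_⟩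
  -- conclusion 3: charpoly A = (X - C r)^n
  have hcharA : A.charpoly = (X - C r) ^ n := by
    apply Polynomial.map_injective (Complex.ofRealHom) Complex.ofReal_injective
    have hmapA : (A.map Complex.ofReal).charpoly = A.charpoly.map Complex.ofRealHom :=
      Matrix.charpoly_map A Complex.ofRealHom
    rw [← hmapA, hlam]
    rw [Polynomial.map_pow, Polynomial.map_sub, Polynomial.map_X, Polynomial.map_C]
    rw [Finset.prod_congr rfl fun i _ => by rw [hlamr i]]
    rw [Finset.prod_const, Finset.card_univ, Fintype.card_fin]
    rfl
  have hCH : (A - Matrix.scalar (Fin n) r) ^ n = 0 := by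
    have h := Matrix.aeval_self_charpoly A
    rw [hcharA, map_pow, map_sub, aeval_X, aeval_C] at h
    convert h using 3
    ext i j
    simp [Matrix.scalar_apply, Matrix.algebraMap_matrix_apply, Matrix.diagonal_apply]
  intro k hk
  rcases hσ0n with h0 | h1
  · -- σ = 0 : A nilpotent
    have hr0 : r = 0 := by rw [hr, h0]; simp
    have hAn : A ^ n = 0 := by
      have := hCH
      rw [hr0] at this
      simpa using this
    have hnil : IsNilpotent (A ^ k) := by
      refine ⟨n, ?_⟩
      rw [← pow_mul, mul_comm, pow_mul, hAn, zero_pow (by omega)]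
    rw [h0]
    simpa using (Matrix.isNilpotent_trace_of_isNilpotent hnil).eq_zero
  · -- σ = n : A - 1 nilpotent
    have hr1 : r = 1 := by rw [hr, h1]; field_simp
    have hN : (A - 1) ^ n = 0 := by
      have := hCH
      rw [hr1] at this
      convert this using 3
      exact (map_one (Matrix.scalar (Fin n))).symm
    have hfac : A ^ k - 1 = (∑ i ∈ range k, A ^ i) * (A - 1) := (geom_sum_mul A k).symm
    have hcomm : Commute (∑ i ∈ range k, A ^ i) (A - 1) := by
      apply Commute.sum_left
      intro i _
      exact ((Commute.refl A).pow_left i).sub_right (Commute.one_right _)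
    have hnil2 : IsNilpotent (A ^ k - 1) := by
      rw [hfac]
      exact hcomm.isNilpotent_mul_left ⟨n, hN⟩
    have htr0 : (A ^ k - 1).trace = 0 :=
      (Matrix.isNilpotent_trace_of_isNilpotent hnil2).eq_zero
    rw [Matrix.trace_sub, Matrix.trace_one] at htr0
    rw [h1]
    simp only [Fintype.card_fin] at htr0
    linarith
end

section
/- Let D_S be a digraph with self-loops of order n, size m, σ self-loops, and c_2 (unordered) 2-cycles. Then E(D_S) ≤ sqrt( (n/2)·( m + 2c_2 + 2σ − 2σ²/n ) ). -/
open Polynomial Finset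
open scoped Classical

open Matrix

-- charpoly invariant under conjugation by matrices with V*U = 1
lemma charpoly_conj_aux {n : ℕ} (B U V : Matrix (Fin n) (Fin n) ℂ) (hVU : V * U = 1) :
    (V * B * U).charpoly = B.charpoly := by
  have hUV : U * V = 1 := mul_eq_one_comm.mp hVU
  have key : charmatrix (V * B * U) = (V.map Polynomial.C) * charmatrix B * (U.map Polynomial.C) := by
    rw [charmatrix]
    rw [charmatrix]
    rw [Matrix.mul_sub, Matrix.sub_mul]
    congr 1
    · -- V * scalar X * U = scalar X
      have : (V.map Polynomial.C) * (Matrix.scalar (Fin n) (X : ℂ[X])) = (Matrix.scalar (Fin n) (X : ℂ[X])) * (V.map Polynomial.C) := by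
        exact (Matrix.scalar_commute (X : ℂ[X]) (Commute.all _) _).symm
      rw [this, Matrix.mul_assoc, ← Matrix.map_mul, hVU]
      simp
    · simp only [RingHom.mapMatrix_apply, ← Matrix.map_mul]
  rw [Matrix.charpoly, Matrix.charpoly, key, det_mul, det_mul]
  rw [mul_comm ((V.map Polynomial.C).det), mul_assoc, ← det_mul, ← Matrix.map_mul, hVU]
  simp

-- eigenvector existence from root of charpoly
lemma exists_eigenvector {n : ℕ} (B : Matrix (Fin n) (Fin n) ℂ) (μ : ℂ)
    (h : B.charpoly.IsRoot μ) : ∃ v : Fin n → ℂ, v ≠ 0 ∧ B.mulVec v = μ • v := by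
  have hdet : (Matrix.scalar (Fin n) μ - B).det = 0 := by
    have := h
    rw [Polynomial.IsRoot, Matrix.charpoly, eval_det, matPolyEquiv_charmatrix] at this
    rwa [Polynomial.eval_sub, Polynomial.eval_X, Polynomial.eval_C] at this
  obtain ⟨v, hv, hmv⟩ := (Matrix.exists_mulVec_eq_zero_iff).mpr hdet
  refine ⟨v, hv, ?_⟩
  rw [Matrix.sub_mulVec] at hmv
  have hsc : (Matrix.scalar (Fin n) μ).mulVec v = μ • v := by
    ext i
    simp [Matrix.scalar, Matrix.mulVec_diagonal, Pi.algebraMap_apply]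
  rw [hsc] at hmv
  have := sub_eq_zero.mp hmv
  exact this.symm

noncomputable section

def finOneSum (n : ℕ) : Fin 1 ⊕ Fin n ≃ Fin (n + 1) where
  toFun := Sum.elim (fun _ => 0) Fin.succ
  invFun := fun i => Fin.cases (Sum.inl 0) (fun j => Sum.inr j) i
  left_inv := by rintro (i | j) <;> simp [Fin.ext_iff]
  right_inv := by intro i; induction i using Fin.cases <;> simp

lemma trace_submatrix_equiv' {m k : Type*} [Fintype m] [Fintype k]
    (M : Matrix m m ℂ) (e : k ≃ m) : (M.submatrix e e).trace = M.trace := by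
  rw [Matrix.trace, Matrix.trace]
  exact Fintype.sum_equiv e _ _ (fun i => rfl)

lemma trace_fromBlocks' {p q : Type*} [Fintype p] [Fintype q]
    (A : Matrix p p ℂ) (B : Matrix p q ℂ) (C : Matrix q p ℂ) (D : Matrix q q ℂ) :
    (Matrix.fromBlocks A B C D).trace = A.trace + D.trace := by
  simp [Matrix.trace, Fintype.sum_sum_type, Matrix.fromBlocks]

lemma schur_key : ∀ (n : ℕ) (B : Matrix (Fin n) (Fin n) ℂ),
    (B.charpoly.roots.map (fun z => z ^ 2)).sum = (B * B).trace ∧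
    (B.charpoly.roots.map Complex.normSq).sum ≤ (B * B.conjTranspose).trace.re := by
  intro n
  induction n with
  | zero =>
    intro B
    have h1 : B.charpoly = 1 := by
      rw [Matrix.charpoly, Matrix.det_isEmpty]
    simp [h1, Matrix.trace]
  | succ n IH =>
    intro B
    -- get a root
    have hdeg : B.charpoly.natDegree = n + 1 := by
      rw [Matrix.charpoly_natDegree_eq_dim, Fintype.card_fin]
    have hdeg' : 0 < B.charpoly.degree := by
      rw [← Polynomial.natDegree_pos_iff_degree_pos, hdeg]; omega
    obtain ⟨μ, hμ⟩ := Complex.exists_root hdeg'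
    obtain ⟨v, hv0, hvec⟩ := exists_eigenvector B μ hμ
    -- normalized eigenvector in EuclideanSpace
    set E := EuclideanSpace ℂ (Fin (n + 1)) with hE
    set v' : E := (WithLp.equiv 2 (Fin (n + 1) → ℂ)).symm v with hv'
    have hv0' : v' ≠ 0 := by
      intro h
      exact hv0 (by simpa [hv'] using congrArg WithLp.ofLp h)
    set w : E := (‖v'‖⁻¹ : ℂ) • v' with hw_def
    have hw1 : ‖w‖ = 1 := by
      rw [hw_def]
      rw [show ((‖v'‖⁻¹ : ℂ) • v') = ((‖v'‖ : ℝ)⁻¹ • v') by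
        simp [← Complex.ofReal_inv, Complex.coe_smul]]
      exact norm_smul_inv_norm hv0'
    have hwvec : ∀ i, B.mulVec (fun i => w i) i = μ * w i := by
      intro i
      have h1 : B.mulVec (fun i => w i) = (‖v'‖⁻¹ : ℂ) • B.mulVec v := by
        rw [show (fun i => w i) = (‖v'‖⁻¹ : ℂ) • v by rfl, Matrix.mulVec_smul]
      rw [h1, hvec]
      have happ : ∀ (c : ℂ) (x : EuclideanSpace ℂ (Fin (n + 1))), (c • x) i = c * x i :=
        fun c x => rfl
      simp only [w, hv', happ, Pi.smul_apply, smul_eq_mul]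
      have : ((WithLp.equiv 2 (Fin (n + 1) → ℂ)).symm v) i = v i := rfl
      rw [this]
      ring
    -- orthonormal basis with b 0 = w
    have hcard : Module.finrank ℂ E = Fintype.card (Fin (n + 1)) := by
      simp [E, finrank_euclideanSpace]
    have horth : Orthonormal ℂ (Set.restrict ({0} : Set (Fin (n + 1))) (fun _ => w)) := by
      constructor
      · intro i; exact hw1
      · intro i j hij
        exact absurd (Subtype.ext (i.2.trans j.2.symm)) hij
    obtain ⟨b, hb⟩ := horth.exists_orthonormalBasis_extension_of_card_eq hcard
    have hb0 : b 0 = w := hb 0 rfl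
    -- the unitary matrix whose columns are the basis vectors
    set U : Matrix (Fin (n + 1)) (Fin (n + 1)) ℂ := Matrix.of (fun i j => b j i) with hU_def
    have hinner : ∀ j k, (∑ i, (starRingEnd ℂ) (b j i) * b k i) = if j = k then 1 else 0 := by
      intro j k
      have := orthonormal_iff_ite.mp b.orthonormal j k
      rw [PiLp.inner_apply] at this
      simp only [RCLike.inner_apply'] at this
      exact this
    have hUU : U.conjTranspose * U = 1 := by
      ext j k
      simp only [Matrix.mul_apply, Matrix.conjTranspose_apply, Matrix.of_apply, hU_def,
        Matrix.one_apply, RCLike.star_def]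
      exact hinner j k
    have hU1 : U * U.conjTranspose = 1 := mul_eq_one_comm.mp hUU
    set Cm : Matrix (Fin (n + 1)) (Fin (n + 1)) ℂ := U.conjTranspose * B * U with hCm
    have hBU : ∀ i, (B * U) i 0 = μ * w i := by
      intro i
      rw [Matrix.mul_apply]
      have hU0 : ∀ k, U k 0 = w k := by
        intro k; rw [hU_def]; simp only [Matrix.of_apply]; rw [hb0]
      calc ∑ k, B i k * U k 0 = ∑ k, B i k * w k := by simp only [hU0]
        _ = B.mulVec (fun k => w k) i := rfl
        _ = μ * w i := hwvec i
    have hcol : ∀ j, Cm j 0 = if j = 0 then μ else 0 := by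
      intro j
      have h1 : Cm j 0 = ∑ i, (starRingEnd ℂ) (b j i) * (μ * w i) := by
        rw [hCm, Matrix.mul_assoc, Matrix.mul_apply]
        congr 1
        ext i
        rw [hBU i]
        simp [hU_def, Matrix.conjTranspose_apply, RCLike.star_def]
      rw [h1]
      have h2 : ∑ i, (starRingEnd ℂ) (b j i) * (μ * w i)
          = μ * ∑ i, (starRingEnd ℂ) (b j i) * b 0 i := by
        rw [Finset.mul_sum]
        congr 1; ext i; rw [hb0]; ring
      rw [h2, hinner j 0]
      by_cases hj : j = 0 <;> simp [hj]
    have hchar : Cm.charpoly = B.charpoly := charpoly_conj_aux B U U.conjTranspose hUU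
    have htr2 : (Cm * Cm).trace = (B * B).trace := by
      rw [hCm]
      have key : (U.conjTranspose * B * U) * (U.conjTranspose * B * U)
          = U.conjTranspose * (B * B) * U := by
        simp only [Matrix.mul_assoc]
        rw [show U * (U.conjTranspose * (B * U)) = B * U from by
          rw [← Matrix.mul_assoc, hU1, Matrix.one_mul]]
      rw [key, Matrix.trace_mul_comm, ← Matrix.mul_assoc, ← Matrix.mul_assoc, hU1,
        Matrix.one_mul]
    have hCmH : Cm.conjTranspose = U.conjTranspose * B.conjTranspose * U := by
      rw [hCm]
      simp only [Matrix.conjTranspose_mul, Matrix.conjTranspose_conjTranspose]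
      rw [Matrix.mul_assoc]
    have htrH : (Cm * Cm.conjTranspose).trace = (B * B.conjTranspose).trace := by
      rw [hCm, hCmH]
      have key : (U.conjTranspose * B * U) * (U.conjTranspose * B.conjTranspose * U)
          = U.conjTranspose * (B * B.conjTranspose) * U := by
        simp only [Matrix.mul_assoc]
        rw [show U * (U.conjTranspose * (B.conjTranspose * U)) = B.conjTranspose * U from by
          rw [← Matrix.mul_assoc, hU1, Matrix.one_mul]]
      rw [key, Matrix.trace_mul_comm, ← Matrix.mul_assoc, ← Matrix.mul_assoc, hU1,
        Matrix.one_mul]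
    -- block decomposition
    set e : Fin 1 ⊕ Fin n ≃ Fin (n + 1) := finOneSum n with he
    set M0 : Matrix (Fin 1 ⊕ Fin n) (Fin 1 ⊕ Fin n) ℂ := Cm.submatrix e e with hM0_def
    set A1 : Matrix (Fin 1) (Fin 1) ℂ := Matrix.of (fun _ _ => μ) with hA1_def
    set B1 : Matrix (Fin 1) (Fin n) ℂ := Matrix.of (fun _ j => Cm 0 j.succ) with hB1_def
    set D : Matrix (Fin n) (Fin n) ℂ := Matrix.of (fun i j => Cm i.succ j.succ) with hD_def
    have hM0char : M0.charpoly = Cm.charpoly := by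
      have h := Matrix.charpoly_reindex e.symm Cm
      rw [← h]
      congr 1
    have hM0 : M0 = Matrix.fromBlocks A1 B1 0 D := by
      ext i j
      rcases i with i | i <;> rcases j with j | j
      · have hi : i = 0 := Subsingleton.elim _ _
        have hj : j = 0 := Subsingleton.elim _ _
        subst hi; subst hj
        show Cm (e (Sum.inl 0)) (e (Sum.inl 0)) = μ
        have : e (Sum.inl 0) = 0 := rfl
        rw [this]
        simpa using hcol 0
      · rfl
      · show Cm (e (Sum.inr i)) (e (Sum.inl j)) = 0
        have h1 : e (Sum.inr i) = i.succ := rfl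
        have h2 : e (Sum.inl j) = 0 := rfl
        rw [h1, h2]
        simpa [Fin.succ_ne_zero] using hcol i.succ
      · rfl
    have hA1char : A1.charpoly = X - C μ := by
      rw [Matrix.charpoly, Matrix.det_fin_one]
      rw [charmatrix_apply_eq]
      rfl
    have hroots : B.charpoly.roots = μ ::ₘ D.charpoly.roots := by
      rw [← hchar, ← hM0char, hM0, Matrix.charpoly_fromBlocks_zero₂₁, hA1char,
        Polynomial.roots_mul (mul_ne_zero (Polynomial.X_sub_C_ne_zero μ)
          (Matrix.charpoly_monic D).ne_zero),
        Polynomial.roots_X_sub_C, Multiset.singleton_add]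
    -- trace identities via blocks
    have htrM0 : (M0 * M0).trace = (Cm * Cm).trace := by
      rw [hM0_def, Matrix.submatrix_mul_equiv]
      exact trace_submatrix_equiv' _ e
    have htrM0H : (M0 * M0.conjTranspose).trace = (Cm * Cm.conjTranspose).trace := by
      rw [hM0_def, Matrix.conjTranspose_submatrix, Matrix.submatrix_mul_equiv]
      exact trace_submatrix_equiv' _ e
    have hA1sq : (A1 * A1).trace = μ ^ 2 := by
      simp [Matrix.trace, Matrix.mul_apply, hA1_def, sq]
    have hblock2 : (M0 * M0).trace = μ ^ 2 + (D * D).trace := by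
      rw [hM0, Matrix.fromBlocks_multiply, trace_fromBlocks']
      rw [Matrix.mul_zero, add_zero, Matrix.zero_mul, zero_add, ← hA1sq]
    have hblockH : (M0 * M0.conjTranspose).trace.re
        ≥ Complex.normSq μ + (D * D.conjTranspose).trace.re := by
      rw [hM0, Matrix.fromBlocks_conjTranspose, Matrix.fromBlocks_multiply, trace_fromBlocks']
      rw [Matrix.conjTranspose_zero, Matrix.zero_mul, zero_add]
      have hA1H : (A1 * A1.conjTranspose).trace = (Complex.normSq μ : ℂ) := by
        simp [Matrix.trace, Matrix.mul_apply, Matrix.conjTranspose_apply, hA1_def,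
          RCLike.star_def, Complex.mul_conj]
      have hB1H : 0 ≤ (B1 * B1.conjTranspose).trace.re := by
        have : (B1 * B1.conjTranspose).trace = ((∑ j, Complex.normSq (B1 0 j) : ℝ) : ℂ) := by
          simp [Matrix.trace, Matrix.mul_apply, Matrix.conjTranspose_apply,
            RCLike.star_def, Complex.mul_conj]
        rw [this, Complex.ofReal_re]
        exact Finset.sum_nonneg fun j _ => Complex.normSq_nonneg _
      rw [Matrix.trace_add, hA1H]
      simp only [Complex.add_re, Complex.ofReal_re]
      linarith
    obtain ⟨ih1, ih2⟩ := IH D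
    constructor
    · rw [hroots, Multiset.map_cons, Multiset.sum_cons, ih1, ← htr2, ← htrM0, hblock2]
    · rw [hroots, Multiset.map_cons, Multiset.sum_cons, ← htrH, ← htrM0H]
      have := hblockH
      linarith

lemma sum_eq_card_filter {ι : Type*} [Fintype ι] (f : ι → ℝ) (h : ∀ i, f i = 0 ∨ f i = 1) :
    ∑ i, f i = ((univ.filter fun i => f i = 1).card : ℝ) := by
  rw [← Finset.sum_filter_add_sum_filter_not Finset.univ (fun i => f i = 1)]
  have h2 : ∑ i ∈ univ.filter (fun i => ¬ f i = 1), f i = 0 := by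
    apply Finset.sum_eq_zero
    intro i hi
    rcases h i with h0 | h1
    · exact h0
    · exact absurd h1 (Finset.mem_filter.mp hi).2
  rw [h2, add_zero]
  rw [Finset.sum_congr rfl (fun i hi => (Finset.mem_filter.mp hi).2)]
  simp

lemma card_diag_filter {n : ℕ} (P : Fin n → Prop) :
    (univ.filter fun p : Fin n × Fin n => p.1 = p.2 ∧ P p.1).card
      = (univ.filter fun i => P i).card := by
  apply Finset.card_bij (fun p _ => p.1)
  · intro p hp
    simp only [Finset.mem_filter, Finset.mem_univ, true_and] at hp ⊢
    exact hp.2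
  · intro p hp q hq hpq
    simp only [Finset.mem_filter, Finset.mem_univ, true_and] at hp hq
    have : p.2 = q.2 := by rw [← hp.1, ← hq.1]; exact hpq
    exact Prod.ext hpq this
  · intro i hi
    simp only [Finset.mem_filter, Finset.mem_univ, true_and] at hi ⊢
    exact ⟨(i, i), by simp [hi], rfl⟩

/-- McClelland-type bound for the energy of a digraph with self-loops:
`E(D_S) ≤ sqrt((n/2)(m + 2c₂ + 2σ − 2σ²/n))`. -/
theorem mcclelland_bound {n : ℕ} (hn : 0 < n)
    (A : Matrix (Fin n) (Fin n) ℝ)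
    (h01 : ∀ i j, A i j = 0 ∨ A i j = 1)
    (σ : ℕ) (hσ : σ = (univ.filter fun i => A i i = 1).card)
    (m : ℕ)
    (hm : m = (univ.filter fun p : Fin n × Fin n =>
      p.1 ≠ p.2 ∧ A p.1 p.2 = 1).card)
    (c2 : ℕ)
    (hc2 : 2 * c2 = (univ.filter fun p : Fin n × Fin n =>
      p.1 ≠ p.2 ∧ A p.1 p.2 = 1 ∧ A p.2 p.1 = 1).card)
    (lam : Fin n → ℂ)
    (hlam : (A.map (Complex.ofReal)).charpoly = ∏ i, (X - C (lam i))) :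
    ∑ i, |(lam i).re - (σ : ℝ) / (n : ℝ)| ≤
      Real.sqrt ((n : ℝ) / 2 *
        ((m : ℝ) + 2 * c2 + 2 * σ - 2 * (σ : ℝ) ^ 2 / n)) := by
  have hn' : (n : ℝ) ≠ 0 := Nat.cast_ne_zero.mpr hn.ne'
  set B := A.map (Complex.ofReal) with hB
  -- real entry sums
  have hdiag : ∑ i, A i i = (σ : ℝ) := by
    rw [hσ]; exact sum_eq_card_filter _ (fun i => h01 i i)
  have hsum2 : ∑ p : Fin n × Fin n, A p.1 p.2 * A p.2 p.1 = 2 * (c2 : ℝ) + σ := by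
    have h01' : ∀ p : Fin n × Fin n, A p.1 p.2 * A p.2 p.1 = 0 ∨ A p.1 p.2 * A p.2 p.1 = 1 := by
      intro p
      rcases h01 p.1 p.2 with h | h <;> rcases h01 p.2 p.1 with h' | h' <;>
        simp [h, h']
    rw [sum_eq_card_filter _ h01']
    have hiff : ∀ p : Fin n × Fin n,
        (A p.1 p.2 * A p.2 p.1 = 1) ↔ (A p.1 p.2 = 1 ∧ A p.2 p.1 = 1) := by
      intro p
      rcases h01 p.1 p.2 with h | h <;> rcases h01 p.2 p.1 with h' | h' <;>
        simp [h, h']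
    have hfe : (univ.filter fun p : Fin n × Fin n => A p.1 p.2 * A p.2 p.1 = 1)
        = univ.filter fun p : Fin n × Fin n => A p.1 p.2 = 1 ∧ A p.2 p.1 = 1 := by
      apply Finset.filter_congr
      intro p _
      simp [hiff p]
    rw [hfe]
    have hsplit := Finset.card_filter_add_card_filter_not
      (s := univ.filter fun p : Fin n × Fin n => A p.1 p.2 = 1 ∧ A p.2 p.1 = 1)
      (p := fun p => p.1 ≠ p.2)
    rw [Finset.filter_filter, Finset.filter_filter] at hsplit
    have e1 : (univ.filter fun p : Fin n × Fin n =>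
        (A p.1 p.2 = 1 ∧ A p.2 p.1 = 1) ∧ p.1 ≠ p.2).card = 2 * c2 := by
      rw [hc2]; congr 1; apply Finset.filter_congr; intro p _; constructor <;> (intro h; tauto)
    have e2 : (univ.filter fun p : Fin n × Fin n =>
        (A p.1 p.2 = 1 ∧ A p.2 p.1 = 1) ∧ ¬ p.1 ≠ p.2).card = σ := by
      rw [hσ]
      rw [← card_diag_filter (fun i => A i i = 1)]
      congr 1; apply Finset.filter_congr; intro p _
      obtain ⟨a, b⟩ := p
      simp only [not_not]
      constructor
      · rintro ⟨⟨h1, h2⟩, h3⟩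
        subst h3
        exact ⟨rfl, h1⟩
      · rintro ⟨h3, h1⟩
        subst h3
        exact ⟨⟨h1, h1⟩, rfl⟩
    rw [e1, e2] at hsplit
    have : (univ.filter fun p : Fin n × Fin n => A p.1 p.2 = 1 ∧ A p.2 p.1 = 1).card
        = 2 * c2 + σ := hsplit.symm
    rw [this]
    push_cast
    ring
  have hsum1 : ∑ p : Fin n × Fin n, A p.1 p.2 = (m : ℝ) + σ := by
    rw [sum_eq_card_filter (fun p : Fin n × Fin n => A p.1 p.2) (fun p => h01 p.1 p.2)]
    have hsplit := Finset.card_filter_add_card_filter_not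
      (s := univ.filter fun p : Fin n × Fin n => A p.1 p.2 = 1)
      (p := fun p => p.1 ≠ p.2)
    rw [Finset.filter_filter, Finset.filter_filter] at hsplit
    have e1 : (univ.filter fun p : Fin n × Fin n =>
        A p.1 p.2 = 1 ∧ p.1 ≠ p.2).card = m := by
      rw [hm]; congr 1; apply Finset.filter_congr; intro p _; constructor <;> (intro h; tauto)
    have e2 : (univ.filter fun p : Fin n × Fin n =>
        A p.1 p.2 = 1 ∧ ¬ p.1 ≠ p.2).card = σ := by
      rw [hσ, ← card_diag_filter (fun i => A i i = 1)]
      congr 1; apply Finset.filter_congr; intro p _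
      obtain ⟨a, b⟩ := p
      simp only [not_not]
      constructor
      · rintro ⟨h1, h3⟩
        subst h3
        exact ⟨rfl, h1⟩
      · rintro ⟨h3, h1⟩
        subst h3
        exact ⟨h1, rfl⟩
    rw [e1, e2] at hsplit
    have : (univ.filter fun p : Fin n × Fin n => A p.1 p.2 = 1).card = m + σ := hsplit.symm
    rw [this]; push_cast; ring
  -- traces of B
  have htrB : B.trace = ((σ : ℝ) : ℂ) := by
    rw [Matrix.trace]
    have : ∀ i, B.diag i = ((A i i : ℝ) : ℂ) := fun i => rfl
    simp only [this]
    rw [← Complex.ofReal_sum]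
    rw [hdiag]
  have htrB2 : (B * B).trace = ((2 * (c2 : ℝ) + σ : ℝ) : ℂ) := by
    rw [Matrix.trace]
    have : ∀ i, (B * B).diag i = ∑ j, ((A i j * A j i : ℝ) : ℂ) := by
      intro i
      simp [Matrix.diag, Matrix.mul_apply, hB, Matrix.map_apply]
    simp only [this]
    rw [← hsum2, Fintype.sum_prod_type]
    push_cast
    rfl
  have htrBH : (B * B.conjTranspose).trace = (((m : ℝ) + σ : ℝ) : ℂ) := by
    rw [Matrix.trace]
    have hAsq : ∀ i j : Fin n, A i j * A i j = A i j := by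
      intro i j; rcases h01 i j with h | h <;> simp [h]
    have : ∀ i, (B * B.conjTranspose).diag i = ∑ j, ((A i j : ℝ) : ℂ) := by
      intro i
      simp only [Matrix.diag, Matrix.mul_apply, Matrix.conjTranspose_apply, hB,
        Matrix.map_apply, RCLike.star_def, Complex.conj_ofReal]
      congr 1; ext j
      rw [← Complex.ofReal_mul, hAsq i j]
    simp only [this]
    rw [← hsum1, Fintype.sum_prod_type]
    push_cast
    rfl
  -- roots of charpoly
  have hroots : B.charpoly.roots = Multiset.map lam Finset.univ.val := by
    rw [hlam]
    have : ∏ i, (X - C (lam i))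
        = (Multiset.map (fun a => X - C a) (Multiset.map lam Finset.univ.val)).prod := by
      rw [Multiset.map_map]
      rfl
    rw [this, Polynomial.roots_multiset_prod_X_sub_C]
  have hmsum : ∀ f : ℂ → ℂ, (Multiset.map f (Multiset.map lam Finset.univ.val)).sum
      = ∑ i, f (lam i) := by
    intro f
    rw [Multiset.map_map]
    rfl
  have hmsumR : ∀ f : ℂ → ℝ, (Multiset.map f (Multiset.map lam Finset.univ.val)).sum
      = ∑ i, f (lam i) := by
    intro f
    rw [Multiset.map_map]
    rfl
  -- three key spectral identities
  have hS1 : ∑ i, lam i = ((σ : ℝ) : ℂ) := by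
    have h := Matrix.trace_eq_sum_roots_charpoly B
    rw [hroots] at h
    have h2 : (Multiset.map lam Finset.univ.val).sum = ∑ i, lam i := rfl
    rw [h2] at h
    rw [← h, htrB]
  obtain ⟨hK1, hK2⟩ := schur_key n B
  have hS2 : ∑ i, (lam i) ^ 2 = ((2 * (c2 : ℝ) + σ : ℝ) : ℂ) := by
    rw [hroots, hmsum] at hK1
    rw [hK1, htrB2]
  have hS3 : ∑ i, Complex.normSq (lam i) ≤ (m : ℝ) + σ := by
    rw [hroots, hmsumR] at hK2
    rw [htrBH] at hK2
    simpa using hK2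
  -- pass to real parts
  have hr1 : ∑ i, (lam i).re = (σ : ℝ) := by
    have := congrArg Complex.re hS1
    rwa [Complex.re_sum, Complex.ofReal_re] at this
  have hr2sum : ∑ i, ((lam i) ^ 2).re = 2 * (c2 : ℝ) + σ := by
    have := congrArg Complex.re hS2
    rwa [Complex.re_sum, Complex.ofReal_re] at this
  have hresq : ∀ z : ℂ, (z.re) ^ 2 = ((z ^ 2).re + Complex.normSq z) / 2 := by
    intro z
    rw [sq z, Complex.mul_re, Complex.normSq_apply]
    ring
  have hr2 : ∑ i, ((lam i).re) ^ 2 ≤ ((m : ℝ) + 2 * c2 + 2 * σ) / 2 := by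
    have : ∑ i, ((lam i).re) ^ 2
        = ((∑ i, ((lam i) ^ 2).re) + ∑ i, Complex.normSq (lam i)) / 2 := by
      rw [← Finset.sum_add_distrib, Finset.sum_div]
      exact Finset.sum_congr rfl fun i _ => hresq (lam i)
    rw [this, hr2sum]
    linarith
  -- Cauchy–Schwarz and conclusion
  set t := (σ : ℝ) / n with ht
  have hvar : ∑ i, ((lam i).re - t) ^ 2 = (∑ i, ((lam i).re) ^ 2) - (σ : ℝ) ^ 2 / n := by
    have expand : ∑ i, ((lam i).re - t) ^ 2
        = (∑ i, ((lam i).re) ^ 2) - 2 * t * (∑ i, (lam i).re) + n * t ^ 2 := by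
      rw [Finset.sum_congr rfl (fun i _ => by ring :
        ∀ i ∈ univ, ((lam i).re - t) ^ 2 = ((lam i).re) ^ 2 - 2 * t * (lam i).re + t ^ 2)]
      rw [Finset.sum_add_distrib, Finset.sum_sub_distrib, ← Finset.mul_sum]
      simp [Finset.card_univ, mul_comm]
    rw [expand, hr1, ht]
    field_simp
    ring
  have hCS : (∑ i, |(lam i).re - t|) ^ 2 ≤ (n : ℝ) * ∑ i, ((lam i).re - t) ^ 2 := by
    have := sq_sum_le_card_mul_sum_sq (s := (univ : Finset (Fin n)))
      (f := fun i => |(lam i).re - t|)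
    simp only [Finset.card_univ, Fintype.card_fin, sq_abs] at this
    exact this
  have hfinal : (∑ i, |(lam i).re - t|) ^ 2
      ≤ (n : ℝ) / 2 * ((m : ℝ) + 2 * c2 + 2 * σ - 2 * (σ : ℝ) ^ 2 / n) := by
    have h1 : (n : ℝ) * ∑ i, ((lam i).re - t) ^ 2
        ≤ (n : ℝ) * (((m : ℝ) + 2 * c2 + 2 * σ) / 2 - (σ : ℝ) ^ 2 / n) := by
      apply mul_le_mul_of_nonneg_left _ (Nat.cast_nonneg n)
      rw [hvar]
      linarith
    have h2 : (n : ℝ) * (((m : ℝ) + 2 * c2 + 2 * σ) / 2 - (σ : ℝ) ^ 2 / n)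
        = (n : ℝ) / 2 * ((m : ℝ) + 2 * c2 + 2 * σ - 2 * (σ : ℝ) ^ 2 / n) := by
      field_simp
    calc (∑ i, |(lam i).re - t|) ^ 2 ≤ (n : ℝ) * ∑ i, ((lam i).re - t) ^ 2 := hCS
      _ ≤ _ := by rw [← h2]; exact h1
  have hnonneg : 0 ≤ ∑ i, |(lam i).re - t| :=
    Finset.sum_nonneg fun i _ => abs_nonneg _
  calc ∑ i, |(lam i).re - t| = Real.sqrt ((∑ i, |(lam i).re - t|) ^ 2) := by
        rw [Real.sqrt_sq hnonneg]
    _ ≤ Real.sqrt ((n : ℝ) / 2 * ((m : ℝ) + 2 * c2 + 2 * σ - 2 * (σ : ℝ) ^ 2 / n)) :=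
        Real.sqrt_le_sqrt hfinal
end
end

section
/- Let D_S be a digraph with self-loops of order n, size m, σ ≥ 1 self-loops, c_2 2-cycles, and let its complement (with adjacency matrix J_n − A) have size m̄ = n(n−1) − m and c̄_2 2-cycles. Then E(D_S) + E(complement of D_S) ≤ sqrt( n·( n² − n + 2c_2 + 2c̄_2 + 4σ − 4σ²/n ) ). -/
open Polynomial Finset
open scoped Classical

open Matrix
open scoped ComplexConjugate

lemma dsE_frob_trace {k : ℕ} (P : Matrix (Fin k) (Fin k) ℂ) :
    (Pᴴ * P).trace.re = ∑ j, ∑ i, Complex.normSq (P i j) := by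
  simp only [Matrix.trace, Matrix.diag, Matrix.mul_apply, Matrix.conjTranspose_apply]
  rw [Complex.re_sum]
  refine Finset.sum_congr rfl fun j _ => ?_
  rw [Complex.re_sum]
  refine Finset.sum_congr rfl fun i _ => ?_
  rw [Complex.star_def, ← Complex.normSq_eq_conj_mul_self]
  exact Complex.ofReal_re _

lemma dsE_trace_conj {k : ℕ} (W P : Matrix (Fin k) (Fin k) ℂ) (hW2 : W * Wᴴ = 1) :
    (Wᴴ * P * W).trace = P.trace := by
  rw [Matrix.trace_mul_comm, ← Matrix.mul_assoc, hW2, Matrix.one_mul]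

lemma dsE_conj_mul {k : ℕ} (W P Q : Matrix (Fin k) (Fin k) ℂ) (hW2 : W * Wᴴ = 1) :
    (Wᴴ * P * W) * (Wᴴ * Q * W) = Wᴴ * (P * Q) * W := by
  have h : W * (Wᴴ * Q * W) = Q * W := by
    rw [← Matrix.mul_assoc, ← Matrix.mul_assoc, hW2, Matrix.one_mul]
  calc (Wᴴ * P * W) * (Wᴴ * Q * W) = (Wᴴ * P) * (W * (Wᴴ * Q * W)) := by
        rw [Matrix.mul_assoc]
    _ = (Wᴴ * P) * (Q * W) := by rw [h]
    _ = Wᴴ * (P * Q) * W := by rw [Matrix.mul_assoc, Matrix.mul_assoc, Matrix.mul_assoc]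

lemma dsE_charpoly_first_col {n : ℕ} (N : Matrix (Fin (n+1)) (Fin (n+1)) ℂ)
    (h : ∀ j : Fin n, N j.succ 0 = 0) :
    N.charpoly = (X - C (N 0 0)) * (N.submatrix Fin.succ Fin.succ).charpoly := by
  have hsub : (charmatrix N).submatrix Fin.succ Fin.succ
      = charmatrix (N.submatrix Fin.succ Fin.succ) := by
    ext i j
    by_cases hij : i = j
    · subst hij; simp
    · rw [Matrix.submatrix_apply, charmatrix_apply_ne _ _ _ (by simpa [Fin.succ_inj] using hij),
        charmatrix_apply_ne _ _ _ hij, Matrix.submatrix_apply]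
  rw [Matrix.charpoly, Matrix.det_succ_column_zero, Fin.sum_univ_succ]
  have h0 : ∀ j : Fin n, charmatrix N j.succ 0 = 0 := fun j => by
    rw [charmatrix_apply_ne _ _ _ (Fin.succ_ne_zero j), h, map_zero, neg_zero]
  simp [h0, h, Fin.succAbove_zero, hsub, Matrix.charpoly]

lemma dsE_charpoly_conj {k : ℕ} (P Q M : Matrix (Fin k) (Fin k) ℂ)
    (hQP : Q * P = 1) :
    (Q * M * P).charpoly = M.charpoly := by
  have hmap : (Q.map (C : ℂ →+* ℂ[X])) * (P.map C) = 1 := by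
    rw [← Matrix.map_mul, hQP, Matrix.map_one _ (map_zero C) (map_one C)]
  have hcm : charmatrix (Q * M * P) = Q.map C * charmatrix M * P.map C := by
    unfold charmatrix
    rw [Matrix.mul_sub, Matrix.sub_mul]
    congr 1
    · have hcomm : (Q.map (C : ℂ →+* ℂ[X])) * Matrix.scalar (Fin k) X
          = Matrix.scalar (Fin k) X * Q.map C :=
        (Matrix.scalar_commute _ (fun r => Commute.all _ _) _).symm
      rw [hcomm, Matrix.mul_assoc, hmap, Matrix.mul_one]
    · simp [RingHom.mapMatrix_apply, Matrix.map_mul]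
  rw [Matrix.charpoly, Matrix.charpoly, hcm, Matrix.det_mul, Matrix.det_mul]
  have h1 : (Q.map (C : ℂ →+* ℂ[X])).det * (P.map C).det = 1 := by
    rw [← Matrix.det_mul, hmap, Matrix.det_one]
  calc (Q.map (C : ℂ →+* ℂ[X])).det * (charmatrix M).det * (P.map C).det
      = (charmatrix M).det * ((Q.map C).det * (P.map C).det) := by ring
    _ = (charmatrix M).det := by rw [h1, mul_one]

lemma dsE_spectral : ∀ (n : ℕ) (M : Matrix (Fin n) (Fin n) ℂ),
    M.charpoly.roots.sum = M.trace ∧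
    (M.charpoly.roots.map (fun z => z ^ 2)).sum = (M * M).trace ∧
    (M.charpoly.roots.map Complex.normSq).sum ≤ (Mᴴ * M).trace.re := by
  intro n
  induction n with
  | zero =>
    intro M
    have h1 : M.charpoly = 1 := by rw [Matrix.charpoly, Matrix.det_isEmpty]
    simp [h1, Matrix.trace]
  | succ n ih =>
    intro M
    obtain ⟨c, hc⟩ := Module.End.exists_eigenvalue (Matrix.mulVecLin M)
    obtain ⟨v, hv⟩ := hc.exists_hasEigenvector
    have hv0 : v ≠ 0 := hv.right
    have hMv : M.mulVec v = c • v := by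
      have := hv.apply_eq_smul
      simpa [Matrix.mulVecLin_apply] using this
    set v' : EuclideanSpace ℂ (Fin (n+1)) := (WithLp.equiv 2 _).symm v with hv'def
    have hv'0 : v' ≠ 0 := by simpa [hv'def] using hv0
    set r : ℝ := ‖v'‖ with hrdef
    have hr : r ≠ 0 := norm_ne_zero_iff.mpr hv'0
    set u : EuclideanSpace ℂ (Fin (n+1)) := ((r : ℂ)⁻¹ • v' : EuclideanSpace ℂ (Fin (n+1)))
      with hudef
    have hui : ∀ i, u i = (r : ℂ)⁻¹ * v i := fun i => rfl
    have hunorm : ‖u‖ = 1 := by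
      have h : ‖u‖ = ‖((r : ℂ))‖⁻¹ * ‖v'‖ := by rw [hudef, norm_smul, norm_inv]
      rw [h, Complex.norm_real, Real.norm_eq_abs, abs_of_nonneg (norm_nonneg _)]
      exact inv_mul_cancel₀ hr
    have hortho : Orthonormal ℂ (Set.restrict {(0 : Fin (n+1))} (fun _ => u)) := by
      rw [orthonormal_iff_ite]
      rintro ⟨i, hi⟩ ⟨j, hj⟩
      simp only [Set.mem_singleton_iff] at hi hj
      subst hi; subst hj
      simp [Set.restrict, inner_self_eq_norm_sq_to_K, hunorm]
    have hcard : Module.finrank ℂ (EuclideanSpace ℂ (Fin (n+1))) = Fintype.card (Fin (n+1)) := by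
      simp
    obtain ⟨b, hb⟩ := hortho.exists_orthonormalBasis_extension_of_card_eq hcard
    have hb0 : b 0 = u := hb 0 rfl
    set W : Matrix (Fin (n+1)) (Fin (n+1)) ℂ := Matrix.of (fun i j => b j i) with hWdef
    have hW1 : Wᴴ * W = 1 := by
      ext j k
      rw [Matrix.mul_apply]
      have hip := orthonormal_iff_ite.mp b.orthonormal j k
      rw [PiLp.inner_apply] at hip
      simp only [RCLike.inner_apply] at hip
      simp only [Matrix.conjTranspose_apply, hWdef, Matrix.of_apply, Matrix.one_apply]
      rw [← hip]
      refine Finset.sum_congr rfl fun x _ => ?_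
      rw [mul_comm]
      rfl
    have hW2 : W * Wᴴ = 1 := mul_eq_one_comm.mp hW1
    have hW0 : ∀ k, W k 0 = u k := fun k => by rw [hWdef, Matrix.of_apply, hb0]
    have hMu : ∀ l, (∑ k, M l k * u k) = c * u l := by
      intro l
      have h1 : M.mulVec v l = c * v l := by rw [hMv]; rfl
      have h2 : (∑ k, M l k * v k) = c * v l := by
        rw [← h1]; simp [Matrix.mulVec, dotProduct]
      calc (∑ k, M l k * u k) = (r : ℂ)⁻¹ * ∑ k, M l k * v k := by
            rw [Finset.mul_sum]
            exact Finset.sum_congr rfl fun k _ => by rw [hui k]; ring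
        _ = c * u l := by rw [h2, hui l]; ring
    set N : Matrix (Fin (n+1)) (Fin (n+1)) ℂ := Wᴴ * M * W with hNdef
    have hMW : ∀ l, (M * W) l 0 = c * u l := by
      intro l
      rw [Matrix.mul_apply]
      calc (∑ k, M l k * W k 0) = ∑ k, M l k * u k :=
            Finset.sum_congr rfl fun k _ => by rw [hW0]
        _ = c * u l := hMu l
    have hNcol : ∀ j, N j 0 = (if j = 0 then c else 0) := by
      intro j
      have hN : N j 0 = ∑ l, star (W l j) * (c * u l) := by
        rw [hNdef, Matrix.mul_assoc, Matrix.mul_apply]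
        exact Finset.sum_congr rfl fun l _ => by
          rw [hMW l, Matrix.conjTranspose_apply]
      rw [hN]
      have h2 : (∑ l, star (W l j) * (c * u l)) = c * (inner ℂ (b j) (b 0) : ℂ) := by
        rw [hb0, PiLp.inner_apply, Finset.mul_sum]
        refine Finset.sum_congr rfl fun l _ => ?_
        simp only [RCLike.inner_apply, hWdef, Matrix.of_apply, Complex.star_def]
        ring
      rw [h2, orthonormal_iff_ite.mp b.orthonormal j 0]
      by_cases hj : j = 0 <;> simp [hj]
    set M' : Matrix (Fin n) (Fin n) ℂ := N.submatrix Fin.succ Fin.succ with hM'def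
    have hN00 : N 0 0 = c := by rw [hNcol]; simp
    have hNchar : N.charpoly = (X - C c) * M'.charpoly := by
      have h0 : ∀ j : Fin n, N j.succ 0 = 0 := fun j => by
        rw [hNcol]; simp [Fin.succ_ne_zero]
      have := dsE_charpoly_first_col N h0
      rwa [hN00] at this
    have hMchar : M.charpoly = N.charpoly := (dsE_charpoly_conj W Wᴴ M hW1).symm
    have hroots : M.charpoly.roots = c ::ₘ M'.charpoly.roots := by
      have hne : (X - C c) * M'.charpoly ≠ 0 := hNchar ▸ N.charpoly_monic.ne_zero
      rw [hMchar, hNchar, Polynomial.roots_mul hne, Polynomial.roots_X_sub_C,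
        Multiset.singleton_add]
    have htrN : N.trace = c + M'.trace := by
      simp only [Matrix.trace, Matrix.diag]
      rw [Fin.sum_univ_succ, hN00]
      congr 1
    have hNN : ∀ i : Fin n, (N * N) i.succ i.succ = (M' * M') i i := by
      intro i
      rw [Matrix.mul_apply, Matrix.mul_apply, Fin.sum_univ_succ]
      have hz : N i.succ 0 * N 0 i.succ = 0 := by
        rw [hNcol]; simp [Fin.succ_ne_zero]
      rw [hz, zero_add]
      exact Finset.sum_congr rfl fun j _ => by simp [hM'def]
    have hNN0 : (N * N) 0 0 = c ^ 2 := by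
      rw [Matrix.mul_apply, Fin.sum_univ_succ, hN00]
      have hz : ∀ j : Fin n, N 0 j.succ * N j.succ 0 = 0 := fun j => by
        rw [hNcol]; simp [Fin.succ_ne_zero]
      simp [hz, pow_two]
    have htrNN : (N * N).trace = c ^ 2 + (M' * M').trace := by
      simp only [Matrix.trace, Matrix.diag]
      rw [Fin.sum_univ_succ, hNN0]
      congr 1
      exact Finset.sum_congr rfl fun i _ => hNN i
    have hfrob : Complex.normSq c + (M'ᴴ * M').trace.re ≤ (Nᴴ * N).trace.re := by
      rw [dsE_frob_trace, dsE_frob_trace, Fin.sum_univ_succ]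
      have h1 : (∑ i, Complex.normSq (N i 0)) = Complex.normSq c := by
        rw [Fin.sum_univ_succ, hN00]
        have hz : ∀ j : Fin n, Complex.normSq (N j.succ 0) = 0 := fun j => by
          rw [hNcol]; simp [Fin.succ_ne_zero]
        simp [hz]
      refine add_le_add (le_of_eq h1.symm) (Finset.sum_le_sum fun j _ => ?_)
      rw [Fin.sum_univ_succ]
      have h2 : (∑ i, Complex.normSq (M' i j)) = ∑ i : Fin n, Complex.normSq (N i.succ j.succ) :=
        Finset.sum_congr rfl fun i _ => by simp [hM'def]
      rw [h2]
      exact le_add_of_nonneg_left (Complex.normSq_nonneg _)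
    have hNH : Nᴴ * N = Wᴴ * (Mᴴ * M) * W := by
      have h1 : Nᴴ = Wᴴ * Mᴴ * W := by
        rw [hNdef]
        simp [Matrix.conjTranspose_mul, Matrix.mul_assoc]
      rw [h1, hNdef, dsE_conj_mul W Mᴴ M hW2]
    obtain ⟨ih1, ih2, ih3⟩ := ih M'
    refine ⟨?_, ?_, ?_⟩
    · rw [hroots, Multiset.sum_cons, ih1, ← htrN, hNdef, dsE_trace_conj W M hW2]
    · rw [hroots, Multiset.map_cons, Multiset.sum_cons, ih2, ← htrNN, hNdef,
        dsE_conj_mul W M M hW2, dsE_trace_conj W (M * M) hW2]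
    · rw [hroots, Multiset.map_cons, Multiset.sum_cons]
      calc Complex.normSq c + (Multiset.map Complex.normSq M'.charpoly.roots).sum
          ≤ Complex.normSq c + (M'ᴴ * M').trace.re := by linarith
        _ ≤ (Nᴴ * N).trace.re := hfrob
        _ = (Mᴴ * M).trace.re := by rw [hNH, dsE_trace_conj W (Mᴴ * M) hW2]

lemma dsE_card_eq_sum {α : Type*} [Fintype α] (f : α → ℝ) (hf : ∀ a, f a = 0 ∨ f a = 1) :
    (((univ.filter fun a => f a = 1).card : ℕ) : ℝ) = ∑ a, f a := by
  rw [← Finset.sum_filter_add_sum_filter_not univ (fun a => f a = 1) f]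
  have h1 : ∑ a ∈ univ.filter (fun a => f a = 1), f a
      = ((univ.filter fun a => f a = 1).card : ℝ) := by
    rw [Finset.sum_congr rfl (fun a ha => (Finset.mem_filter.mp ha).2), Finset.sum_const,
      nsmul_eq_mul, mul_one]
  have h2 : ∑ a ∈ univ.filter (fun a => ¬ f a = 1), f a = 0 := by
    refine Finset.sum_eq_zero fun a ha => ?_
    rcases hf a with h | h
    · exact h
    · exact absurd h (Finset.mem_filter.mp ha).2
  rw [h1, h2, add_zero]

lemma dsE_diag_sum {n : ℕ} (g : Fin n → ℝ) :
    (∑ p : Fin n × Fin n, (if p.1 = p.2 then g p.1 else 0)) = ∑ i, g i := by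
  rw [Fintype.sum_prod_type (f := fun p : Fin n × Fin n => if p.1 = p.2 then g p.1 else 0)]
  refine Finset.sum_congr rfl fun i _ => ?_
  simp

lemma dsE_sum_all {n : ℕ} (A : Matrix (Fin n) (Fin n) ℝ) (h01 : ∀ i j, A i j = 0 ∨ A i j = 1)
    (m : ℕ) (hm : m = (univ.filter fun p : Fin n × Fin n => p.1 ≠ p.2 ∧ A p.1 p.2 = 1).card) :
    ∑ i, ∑ j, A i j = (m : ℝ) + ∑ i, A i i := by
  have hf : ∀ p : Fin n × Fin n,
      (if p.1 = p.2 then (0:ℝ) else A p.1 p.2) = 0 ∨ (if p.1 = p.2 then (0:ℝ) else A p.1 p.2) = 1 := by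
    intro p; by_cases h : p.1 = p.2 <;> simp [h, h01 p.1 p.2]
  have hfilter : (univ.filter fun p : Fin n × Fin n => p.1 ≠ p.2 ∧ A p.1 p.2 = 1)
      = univ.filter fun p : Fin n × Fin n => (if p.1 = p.2 then (0:ℝ) else A p.1 p.2) = 1 := by
    refine Finset.filter_congr fun p _ => ?_
    by_cases h : p.1 = p.2 <;> simp [h]
  have hcard : (m : ℝ) = ∑ p : Fin n × Fin n, (if p.1 = p.2 then (0:ℝ) else A p.1 p.2) := by
    rw [hm, hfilter]; exact dsE_card_eq_sum _ hf
  calc ∑ i, ∑ j, A i j = ∑ p : Fin n × Fin n, A p.1 p.2 := by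
        exact (Fintype.sum_prod_type (f := fun p : Fin n × Fin n => A p.1 p.2)).symm
    _ = ∑ p : Fin n × Fin n, ((if p.1 = p.2 then (0:ℝ) else A p.1 p.2)
          + (if p.1 = p.2 then A p.1 p.1 else 0)) := by
        refine Finset.sum_congr rfl fun p _ => ?_
        by_cases h : p.1 = p.2 <;> simp [h]
    _ = (m : ℝ) + ∑ i, A i i := by
        rw [Finset.sum_add_distrib, ← hcard, dsE_diag_sum (fun i => A i i)]

lemma dsE_sum_cross {n : ℕ} (A : Matrix (Fin n) (Fin n) ℝ) (h01 : ∀ i j, A i j = 0 ∨ A i j = 1)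
    (c2 : ℕ) (hc2 : 2 * c2 = (univ.filter fun p : Fin n × Fin n =>
      p.1 ≠ p.2 ∧ A p.1 p.2 = 1 ∧ A p.2 p.1 = 1).card) :
    ∑ i, ∑ j, A i j * A j i = 2 * (c2 : ℝ) + ∑ i, A i i := by
  have hf : ∀ p : Fin n × Fin n,
      (if p.1 = p.2 then (0:ℝ) else A p.1 p.2 * A p.2 p.1) = 0 ∨
      (if p.1 = p.2 then (0:ℝ) else A p.1 p.2 * A p.2 p.1) = 1 := by
    intro p
    by_cases h : p.1 = p.2
    · simp [h]
    · rcases h01 p.1 p.2 with h1 | h1 <;> rcases h01 p.2 p.1 with h2 | h2 <;>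
        simp [h, h1, h2]
  have hfilter : (univ.filter fun p : Fin n × Fin n =>
        p.1 ≠ p.2 ∧ A p.1 p.2 = 1 ∧ A p.2 p.1 = 1)
      = univ.filter fun p : Fin n × Fin n =>
        (if p.1 = p.2 then (0:ℝ) else A p.1 p.2 * A p.2 p.1) = 1 := by
    refine Finset.filter_congr fun p _ => ?_
    by_cases h : p.1 = p.2
    · simp [h]
    · rcases h01 p.1 p.2 with h1 | h1 <;> rcases h01 p.2 p.1 with h2 | h2 <;>
        norm_num [h, h1, h2]
  have hcard : ((2 * c2 : ℕ) : ℝ)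
      = ∑ p : Fin n × Fin n, (if p.1 = p.2 then (0:ℝ) else A p.1 p.2 * A p.2 p.1) := by
    rw [hc2, hfilter]; exact dsE_card_eq_sum _ hf
  have hdiagsq : ∀ i, A i i * A i i = A i i := fun i => by
    rcases h01 i i with h | h <;> rw [h] <;> ring
  calc ∑ i, ∑ j, A i j * A j i = ∑ p : Fin n × Fin n, A p.1 p.2 * A p.2 p.1 := by
        exact (Fintype.sum_prod_type (f := fun p : Fin n × Fin n => A p.1 p.2 * A p.2 p.1)).symm
    _ = ∑ p : Fin n × Fin n, ((if p.1 = p.2 then (0:ℝ) else A p.1 p.2 * A p.2 p.1)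
          + (if p.1 = p.2 then A p.1 p.1 else 0)) := by
        refine Finset.sum_congr rfl fun p _ => ?_
        by_cases h : p.1 = p.2
        · simp [h, hdiagsq p.2]
        · simp [h]
    _ = 2 * (c2 : ℝ) + ∑ i, A i i := by
        rw [Finset.sum_add_distrib, ← hcard, dsE_diag_sum (fun i => A i i)]
        push_cast
        ring

lemma dsE_abs_sum_le {k : ℕ} (x : Fin k → ℝ) (C : ℝ) :
    ∑ i, |x i - C| ≤ Real.sqrt (k * ∑ i, (x i - C)^2) := by
  have h1 : (∑ i, |x i - C|)^2 ≤ k * ∑ i, (x i - C)^2 := by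
    have h := sq_sum_le_card_mul_sum_sq (s := (univ : Finset (Fin k)))
      (f := fun i => |x i - C|)
    simpa [sq_abs] using h
  calc ∑ i, |x i - C| = Real.sqrt ((∑ i, |x i - C|)^2) :=
        (Real.sqrt_sq (Finset.sum_nonneg fun i _ => abs_nonneg _)).symm
    _ ≤ _ := Real.sqrt_le_sqrt h1

lemma dsE_shift {k : ℕ} (hk : (k:ℝ) ≠ 0) (x : Fin k → ℝ) (s : ℝ) (hs : ∑ i, x i = s) :
    ∑ i, (x i - s / k)^2 = (∑ i, x i^2) - s^2 / k := by
  have h : ∀ i, (x i - s/k)^2 = x i^2 - 2*(s/k)*x i + (s/k)^2 := fun i => by ring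
  rw [Finset.sum_congr rfl fun i _ => h i]
  rw [Finset.sum_add_distrib, Finset.sum_sub_distrib, ← Finset.mul_sum, hs, Finset.sum_const,
    Finset.card_univ, Fintype.card_fin, nsmul_eq_mul]
  field_simp
  ring

lemma dsE_sqrt_add (a b : ℝ) (ha : 0 ≤ a) (hb : 0 ≤ b) :
    Real.sqrt a + Real.sqrt b ≤ Real.sqrt (2 * (a + b)) := by
  have h1 : (Real.sqrt a + Real.sqrt b)^2 ≤ 2 * (a + b) := by
    have h2 := Real.sq_sqrt ha
    have h3 := Real.sq_sqrt hb
    nlinarith [sq_nonneg (Real.sqrt a - Real.sqrt b)]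
  calc Real.sqrt a + Real.sqrt b
      = Real.sqrt ((Real.sqrt a + Real.sqrt b)^2) :=
        (Real.sqrt_sq (by positivity)).symm
    _ ≤ _ := Real.sqrt_le_sqrt h1


/-- Upper bound for the sum of the energies of a digraph with self-loops
(`σ ≥ 1`) and its complement `J_n − A`:
`E(D_S) + E(D̄_S) ≤ sqrt(n(n² − n + 2c₂ + 2c̄₂ + 4σ − 4σ²/n))`. -/
theorem energy_sum_complement_bound {n : ℕ} (hn : 0 < n)
    (A : Matrix (Fin n) (Fin n) ℝ)
    (h01 : ∀ i j, A i j = 0 ∨ A i j = 1)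
    (σ : ℕ) (hσ : σ = (univ.filter fun i => A i i = 1).card) (hσ1 : 1 ≤ σ)
    (m : ℕ)
    (hm : m = (univ.filter fun p : Fin n × Fin n =>
      p.1 ≠ p.2 ∧ A p.1 p.2 = 1).card)
    (c2 : ℕ)
    (hc2 : 2 * c2 = (univ.filter fun p : Fin n × Fin n =>
      p.1 ≠ p.2 ∧ A p.1 p.2 = 1 ∧ A p.2 p.1 = 1).card)
    (B : Matrix (Fin n) (Fin n) ℝ)
    (hB : B = (Matrix.of fun _ _ => (1 : ℝ)) - A)
    (cb2 : ℕ)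
    (hcb2 : 2 * cb2 = (univ.filter fun p : Fin n × Fin n =>
      p.1 ≠ p.2 ∧ B p.1 p.2 = 1 ∧ B p.2 p.1 = 1).card)
    (lam : Fin n → ℂ)
    (hlam : (A.map (Complex.ofReal)).charpoly = ∏ i, (X - C (lam i)))
    (mu : Fin n → ℂ)
    (hmu : (B.map (Complex.ofReal)).charpoly = ∏ i, (X - C (mu i))) :
    (∑ i, |(lam i).re - (σ : ℝ) / (n : ℝ)|) +
        (∑ i, |(mu i).re - ((n : ℝ) - σ) / (n : ℝ)|) ≤
      Real.sqrt ((n : ℝ) * ((n : ℝ) ^ 2 - n + 2 * c2 + 2 * cb2 +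
        4 * σ - 4 * (σ : ℝ) ^ 2 / n)) := by
  have hn0 : (n:ℝ) ≠ 0 := Nat.cast_ne_zero.mpr hn.ne'
  have hBij : ∀ i j, B i j = 1 - A i j := fun i j => by
    rw [hB]; simp [Matrix.sub_apply]
  have h01B : ∀ i j, B i j = 0 ∨ B i j = 1 := by
    intro i j
    rcases h01 i j with h | h
    · right; rw [hBij, h]; ring
    · left; rw [hBij, h]; ring
  obtain ⟨hA1, hA2, hA3⟩ := dsE_spectral n (A.map (Complex.ofReal))
  obtain ⟨hB1, hB2, hB3⟩ := dsE_spectral n (B.map (Complex.ofReal))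
  have hprodA : (∏ i, (X - C (lam i))) = ((Multiset.map lam univ.val).map
      fun a => (X : ℂ[X]) - C a).prod := by rw [Multiset.map_map]; rfl
  have hprodB : (∏ i, (X - C (mu i))) = ((Multiset.map mu univ.val).map
      fun a => (X : ℂ[X]) - C a).prod := by rw [Multiset.map_map]; rfl
  have hrootsA : (A.map Complex.ofReal).charpoly.roots = Multiset.map lam univ.val := by
    rw [hlam, hprodA, Polynomial.roots_multiset_prod_X_sub_C]
  have hrootsB : (B.map Complex.ofReal).charpoly.roots = Multiset.map mu univ.val := by
    rw [hmu, hprodB, Polynomial.roots_multiset_prod_X_sub_C]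
  rw [hrootsA] at hA1 hA2 hA3
  rw [hrootsB] at hB1 hB2 hB3
  rw [Multiset.map_map] at hA2 hA3 hB2 hB3
  -- trace computations
  have htrA : (A.map Complex.ofReal).trace = ((∑ i, A i i : ℝ) : ℂ) := by
    rw [Complex.ofReal_sum]
    simp [Matrix.trace, Matrix.diag, Matrix.map_apply]
  have htrB : (B.map Complex.ofReal).trace = ((∑ i, B i i : ℝ) : ℂ) := by
    rw [Complex.ofReal_sum]
    simp [Matrix.trace, Matrix.diag, Matrix.map_apply]
  have htrA2 : ((A.map Complex.ofReal) * (A.map Complex.ofReal)).trace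
      = ((∑ i, ∑ j, A i j * A j i : ℝ) : ℂ) := by
    rw [Complex.ofReal_sum]
    simp only [Matrix.trace, Matrix.diag, Matrix.mul_apply, Matrix.map_apply]
    push_cast
    rfl
  have htrB2 : ((B.map Complex.ofReal) * (B.map Complex.ofReal)).trace
      = ((∑ i, ∑ j, B i j * B j i : ℝ) : ℂ) := by
    rw [Complex.ofReal_sum]
    simp only [Matrix.trace, Matrix.diag, Matrix.mul_apply, Matrix.map_apply]
    push_cast
    rfl
  have hfrobA : ((A.map Complex.ofReal)ᴴ * (A.map Complex.ofReal)).trace.re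
      = ∑ j, ∑ i, (A i j)^2 := by
    rw [dsE_frob_trace]
    refine Finset.sum_congr rfl fun j _ => Finset.sum_congr rfl fun i _ => ?_
    rw [Matrix.map_apply, Complex.normSq_ofReal]; ring
  have hfrobB : ((B.map Complex.ofReal)ᴴ * (B.map Complex.ofReal)).trace.re
      = ∑ j, ∑ i, (B i j)^2 := by
    rw [dsE_frob_trace]
    refine Finset.sum_congr rfl fun j _ => Finset.sum_congr rfl fun i _ => ?_
    rw [Matrix.map_apply, Complex.normSq_ofReal]; ring
  -- counting
  have hdiagA : ∑ i, A i i = (σ : ℝ) := by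
    have hf : ∀ i : Fin n, A i i = 0 ∨ A i i = 1 := fun i => h01 i i
    rw [hσ]
    exact (dsE_card_eq_sum _ hf).symm
  have hallA : ∑ i, ∑ j, A i j = (m : ℝ) + σ := by
    rw [dsE_sum_all A h01 m hm, hdiagA]
  have hcrossA : ∑ i, ∑ j, A i j * A j i = 2*(c2:ℝ) + σ := by
    rw [dsE_sum_cross A h01 c2 hc2, hdiagA]
  have hsqA : ∑ j, ∑ i, (A i j)^2 = (m:ℝ) + σ := by
    have h : ∀ i j, (A i j)^2 = A i j := fun i j => by
      rcases h01 i j with h|h <;> rw [h] <;> ring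
    calc ∑ j, ∑ i, (A i j)^2 = ∑ j, ∑ i, A i j :=
          Finset.sum_congr rfl fun j _ => Finset.sum_congr rfl fun i _ => h i j
      _ = ∑ i, ∑ j, A i j := Finset.sum_comm
      _ = (m:ℝ) + σ := hallA
  have hdiagB : ∑ i, B i i = (n:ℝ) - σ := by
    calc ∑ i, B i i = ∑ i : Fin n, (1 - A i i) :=
          Finset.sum_congr rfl fun i _ => hBij i i
      _ = (n:ℝ) - σ := by
          rw [Finset.sum_sub_distrib, Finset.sum_const, hdiagA]
          simp [Finset.card_univ]
  have hcrossB : ∑ i, ∑ j, B i j * B j i = 2*(cb2:ℝ) + ((n:ℝ) - σ) := by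
    rw [dsE_sum_cross B h01B cb2 hcb2, hdiagB]
  have hsqB : ∑ j, ∑ i, (B i j)^2 = (n:ℝ)^2 - m - σ := by
    have h : ∀ i j, (B i j)^2 = B i j := fun i j => by
      rcases h01B i j with h|h <;> rw [h] <;> ring
    calc ∑ j, ∑ i, (B i j)^2 = ∑ j, ∑ i, B i j :=
          Finset.sum_congr rfl fun j _ => Finset.sum_congr rfl fun i _ => h i j
      _ = ∑ i, ∑ j, B i j := Finset.sum_comm
      _ = ∑ i, ∑ j, ((1:ℝ) - A i j) :=
          Finset.sum_congr rfl fun i _ => Finset.sum_congr rfl fun j _ => hBij i j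
      _ = (n:ℝ)^2 - m - σ := by
          simp only [Finset.sum_sub_distrib, Finset.sum_const, Finset.card_univ,
            Fintype.card_fin, nsmul_eq_mul, mul_one]
          rw [hallA]; ring
  -- real/imag decompositions
  have hreA : ∑ i, (lam i).re = (σ : ℝ) := by
    have h1 : ∑ i, lam i = ((σ:ℝ) : ℂ) := by
      rw [show (∑ i, lam i) = (Multiset.map lam univ.val).sum from rfl, hA1, htrA, hdiagA]
    have := congrArg Complex.re h1
    rwa [Complex.re_sum, Complex.ofReal_re] at this
  have hreB : ∑ i, (mu i).re = (n:ℝ) - σ := by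
    have h1 : ∑ i, mu i = Complex.ofReal ((n:ℝ) - σ) := by
      rw [show (∑ i, mu i) = (Multiset.map mu univ.val).sum from rfl, hB1, htrB, hdiagB]
    have := congrArg Complex.re h1
    rwa [Complex.re_sum, Complex.ofReal_re] at this
  have h2A : ∑ i, ((lam i).re^2 - (lam i).im^2) = 2*(c2:ℝ) + σ := by
    have e : (∑ i, (lam i)^2) = (Multiset.map ((fun z => z ^ 2) ∘ lam) univ.val).sum := rfl
    have h1 : ∑ i, (lam i)^2 = Complex.ofReal (2*(c2:ℝ) + σ) := by
      rw [e, hA2, htrA2, hcrossA]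
    have h := congrArg Complex.re h1
    rw [Complex.re_sum, Complex.ofReal_re] at h
    rw [← h]
    refine Finset.sum_congr rfl fun i _ => ?_
    rw [sq (lam i), Complex.mul_re]; ring
  have h2B : ∑ i, ((mu i).re^2 - (mu i).im^2) = 2*(cb2:ℝ) + ((n:ℝ) - σ) := by
    have e : (∑ i, (mu i)^2) = (Multiset.map ((fun z => z ^ 2) ∘ mu) univ.val).sum := rfl
    have h1 : ∑ i, (mu i)^2 = Complex.ofReal (2*(cb2:ℝ) + ((n:ℝ) - σ)) := by
      rw [e, hB2, htrB2, hcrossB]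
    have h := congrArg Complex.re h1
    rw [Complex.re_sum, Complex.ofReal_re] at h
    rw [← h]
    refine Finset.sum_congr rfl fun i _ => ?_
    rw [sq (mu i), Complex.mul_re]; ring
  have h3A : ∑ i, ((lam i).re^2 + (lam i).im^2) ≤ (m:ℝ) + σ := by
    have h1 : ∑ i, Complex.normSq (lam i) ≤ (m:ℝ) + σ := by
      have := hA3
      rw [hfrobA, hsqA] at this
      exact this
    calc ∑ i, ((lam i).re^2 + (lam i).im^2) = ∑ i, Complex.normSq (lam i) := by
          refine Finset.sum_congr rfl fun i _ => ?_
          rw [Complex.normSq_apply]; ring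
      _ ≤ _ := h1
  have h3B : ∑ i, ((mu i).re^2 + (mu i).im^2) ≤ (n:ℝ)^2 - m - σ := by
    have h1 : ∑ i, Complex.normSq (mu i) ≤ (n:ℝ)^2 - m - σ := by
      have := hB3
      rw [hfrobB, hsqB] at this
      exact this
    calc ∑ i, ((mu i).re^2 + (mu i).im^2) = ∑ i, Complex.normSq (mu i) := by
          refine Finset.sum_congr rfl fun i _ => ?_
          rw [Complex.normSq_apply]; ring
      _ ≤ _ := h1
  -- energies
  have hEA : ∑ i, |(lam i).re - (σ:ℝ)/(n:ℝ)| ≤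
      Real.sqrt ((n:ℝ) * ∑ i, ((lam i).re - (σ:ℝ)/(n:ℝ))^2) :=
    dsE_abs_sum_le (fun i => (lam i).re) _
  have hEB : ∑ i, |(mu i).re - ((n:ℝ) - σ)/(n:ℝ)| ≤
      Real.sqrt ((n:ℝ) * ∑ i, ((mu i).re - ((n:ℝ) - σ)/(n:ℝ))^2) :=
    dsE_abs_sum_le (fun i => (mu i).re) _
  have hshiftA : ∑ i, ((lam i).re - (σ:ℝ)/(n:ℝ))^2
      = (∑ i, (lam i).re^2) - (σ:ℝ)^2/(n:ℝ) := dsE_shift hn0 _ _ hreA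
  have hshiftB : ∑ i, ((mu i).re - ((n:ℝ) - σ)/(n:ℝ))^2
      = (∑ i, (mu i).re^2) - ((n:ℝ) - σ)^2/(n:ℝ) := dsE_shift hn0 _ _ hreB
  have haApos : (0:ℝ) ≤ (n:ℝ) * ∑ i, ((lam i).re - (σ:ℝ)/(n:ℝ))^2 := by positivity
  have haBpos : (0:ℝ) ≤ (n:ℝ) * ∑ i, ((mu i).re - ((n:ℝ) - σ)/(n:ℝ))^2 := by positivity
  have hfinal : 2 * (((n:ℝ) * ∑ i, ((lam i).re - (σ:ℝ)/(n:ℝ))^2)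
        + ((n:ℝ) * ∑ i, ((mu i).re - ((n:ℝ) - σ)/(n:ℝ))^2))
      ≤ (n : ℝ) * ((n : ℝ) ^ 2 - n + 2 * c2 + 2 * cb2 + 4 * σ - 4 * (σ : ℝ) ^ 2 / n) := by
    have htarget : (n : ℝ) * ((n : ℝ) ^ 2 - n + 2 * c2 + 2 * cb2 + 4 * σ - 4 * (σ : ℝ) ^ 2 / n)
        = (n:ℝ)^3 - (n:ℝ)^2 + 2*n*c2 + 2*n*cb2 + 4*n*σ - 4*(σ:ℝ)^2 := by
      field_simp
    rw [htarget, hshiftA, hshiftB]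
    have hQA : (n:ℝ) * ((∑ i, (lam i).re^2) - (σ:ℝ)^2/(n:ℝ))
        = (n:ℝ) * (∑ i, (lam i).re^2) - (σ:ℝ)^2 := by
      rw [mul_sub, mul_div_cancel₀ _ hn0]
    have hQB : (n:ℝ) * ((∑ i, (mu i).re^2) - ((n:ℝ)-σ)^2/(n:ℝ))
        = (n:ℝ) * (∑ i, (mu i).re^2) - ((n:ℝ)-σ)^2 := by
      rw [mul_sub, mul_div_cancel₀ _ hn0]
    rw [hQA, hQB]
    have hSA : (n:ℝ) * (∑ i, (lam i).re^2) ≤ (n:ℝ) * (((m:ℝ) + 2*c2 + 2*σ)/2) := by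
      apply mul_le_mul_of_nonneg_left _ (Nat.cast_nonneg n)
      have e1 : (∑ i, (lam i).re^2) - ∑ i, (lam i).im^2 = 2*(c2:ℝ) + σ := by
        rw [← Finset.sum_sub_distrib]; exact h2A
      have e2 : (∑ i, (lam i).re^2) + ∑ i, (lam i).im^2 ≤ (m:ℝ) + σ := by
        rw [← Finset.sum_add_distrib]; exact h3A
      linarith
    have hSB : (n:ℝ) * (∑ i, (mu i).re^2)
        ≤ (n:ℝ) * (((n:ℝ)^2 - m - σ + 2*cb2 + ((n:ℝ) - σ))/2) := by
      apply mul_le_mul_of_nonneg_left _ (Nat.cast_nonneg n)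
      have e1 : (∑ i, (mu i).re^2) - ∑ i, (mu i).im^2 = 2*(cb2:ℝ) + ((n:ℝ) - σ) := by
        rw [← Finset.sum_sub_distrib]; exact h2B
      have e2 : (∑ i, (mu i).re^2) + ∑ i, (mu i).im^2 ≤ (n:ℝ)^2 - m - σ := by
        rw [← Finset.sum_add_distrib]; exact h3B
      linarith
    linarith [hSA, hSB]
  calc (∑ i, |(lam i).re - (σ : ℝ) / (n : ℝ)|) +
        (∑ i, |(mu i).re - ((n : ℝ) - σ) / (n : ℝ)|)
      ≤ Real.sqrt ((n:ℝ) * ∑ i, ((lam i).re - (σ:ℝ)/(n:ℝ))^2)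
        + Real.sqrt ((n:ℝ) * ∑ i, ((mu i).re - ((n:ℝ) - σ)/(n:ℝ))^2) :=
        add_le_add hEA hEB
    _ ≤ Real.sqrt (2 * (((n:ℝ) * ∑ i, ((lam i).re - (σ:ℝ)/(n:ℝ))^2)
        + ((n:ℝ) * ∑ i, ((mu i).re - ((n:ℝ) - σ)/(n:ℝ))^2))) :=
        dsE_sqrt_add _ _ haApos haBpos
    _ ≤ _ := Real.sqrt_le_sqrt hfinal
end
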